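/- arXiv:2104.04988 — 4 statements merged into one kernel-verified Lean document; each statement's English description precedes it below -/
import Mathlib

section
/- Let N ≥ 0 be an integer and h > 0. For μ ≥ 1 define V : ℂ → ℝ by V(y) = μ − 2 log(1 + (e^{μ} h/(8(1+N)²)) |y^{N+1} − 1|²). Then there is a constant C depending only on N and h such that for all y with |y| = R ≥ 2: |V(y) + μ + 2 log(h/8) − 4 log(1+N) + 4(1+N) log R| ≤ C (R^{-(N+1)} + e^{-μ}). -/
open Real

/-! With `z = y ^ (N + 1)`, `S = R ^ (N + 1) = ‖z‖` and `p = e^μ h / (8 (N + 1)²)`, factor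
`1 + p ‖z - 1‖² = p S² q` with `q = ‖z - 1‖² / ‖z‖² + (p S²)⁻¹`. The logarithms of `p` and `S²`
cancel the explicit terms exactly, leaving `-2 log q`. Since `q ≥ 1/4` and
`|q - 1| ≤ 3 / S + (8 (N + 1)² / h) e^{-μ}`, the bound follows because `log` is `4`-Lipschitz
on `[1/4, ∞)`. -/

theorem Real.abs_log_le_abs_sub_one_div {a x : ℝ} (ha : 0 < a) (ha1 : a ≤ 1) (hx : a ≤ x) :
    |log x| ≤ |x - 1| / a := by
  have hx0 : 0 < x := ha.trans_le hx
  rw [le_div_iff₀ ha]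
  rcases le_or_gt 1 x with hx1 | hx1
  · rw [abs_of_nonneg (log_nonneg hx1), abs_of_nonneg (sub_nonneg.2 hx1)]
    nlinarith [log_le_sub_one_of_pos hx0]
  · rw [abs_of_neg (log_neg hx0 hx1), abs_of_neg (sub_neg.2 hx1)]
    have h := one_sub_inv_le_log_of_pos hx0
    have : x * (1 - x⁻¹) = x - 1 := by field_simp
    nlinarith [log_neg hx0 hx1]

theorem Real.abs_log_add_le {a b : ℝ} (ha : 1 / 4 ≤ a) (hb : 0 ≤ b) :
    |log (a + b)| ≤ 4 * (|a - 1| + b) := by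
  calc |log (a + b)| ≤ |a + b - 1| / (1 / 4) :=
        abs_log_le_abs_sub_one_div (by norm_num) (by norm_num) (by linarith)
    _ ≤ 4 * (|a - 1| + b) := by
        rw [div_div_eq_mul_div, div_one, mul_comm, add_sub_right_comm]
        gcongr
        exact (abs_add_le _ _).trans_eq (by rw [abs_of_nonneg hb])

theorem Real.log_one_add_mul_eq {p S t : ℝ} (hp : 0 < p) (hS : 0 < S) (ht : 0 ≤ t) :
    log (1 + p * t) = log p + 2 * log S + log (t / S ^ 2 + (p * S ^ 2)⁻¹) := by
  have h : 1 + p * t = p * S ^ 2 * (t / S ^ 2 + (p * S ^ 2)⁻¹) := by field_simp; ring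
  rw [h, log_mul (by positivity) (by positivity), log_mul hp.ne' (by positivity), log_pow]
  push_cast; ring

section
variable {E : Type*} [SeminormedAddCommGroup E] {z w : E}

theorem one_div_four_le_norm_sub_sq_div (hz : 0 < ‖z‖) (hw : 2 * ‖w‖ ≤ ‖z‖) :
    1 / 4 ≤ ‖z - w‖ ^ 2 / ‖z‖ ^ 2 := by
  rw [le_div_iff₀ (by positivity)]
  have := pow_le_pow_left₀ (by linarith [norm_nonneg w]) (norm_sub_norm_le z w) 2
  nlinarith

theorem abs_norm_sub_sq_div_sub_one_le (hz : 0 < ‖z‖) (hw : ‖w‖ ≤ ‖z‖) :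
    |‖z - w‖ ^ 2 / ‖z‖ ^ 2 - 1| ≤ 3 * ‖w‖ / ‖z‖ := by
  have hup := norm_sub_le z w
  have hlow := norm_sub_norm_le z w
  have hsq : |‖z - w‖ ^ 2 - ‖z‖ ^ 2| ≤ 3 * ‖w‖ * ‖z‖ := by
    rw [abs_le]; constructor <;> nlinarith [norm_nonneg w, norm_nonneg (z - w)]
  have hz2 := pow_pos hz 2
  rw [div_sub_one hz2.ne', abs_div, abs_of_pos hz2, div_le_div_iff₀ hz2 hz]
  nlinarith

end

theorem log_one_add_exp_mul_eq {N : ℕ} {h R : ℝ} (μ : ℝ) {t : ℝ} (hh : 0 < h) (hR : 0 < R)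
    (ht : 0 ≤ t) :
    (μ - 2 * log (1 + exp μ * h / (8 * ((N:ℝ) + 1) ^ 2) * t))
        + μ + 2 * log (h / 8) - 4 * log ((N:ℝ) + 1) + 4 * ((N:ℝ) + 1) * log R
      = -2 * log (t / (R ^ (N + 1)) ^ 2
          + (exp μ * h / (8 * ((N:ℝ) + 1) ^ 2) * (R ^ (N + 1)) ^ 2)⁻¹) := by
  have hlog_p : log (exp μ * h / (8 * ((N:ℝ) + 1) ^ 2))
      = μ + log (h / 8) - 2 * log ((N:ℝ) + 1) := by
    rw [mul_div_assoc, log_mul (exp_pos μ).ne' (by positivity), log_exp,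
      log_div hh.ne' (by positivity), log_mul (by norm_num) (by positivity), log_pow,
      log_div hh.ne' (by norm_num)]
    push_cast; ring
  rw [log_one_add_mul_eq (S := R ^ (N + 1)) (by positivity) (by positivity) ht, hlog_p, log_pow]
  push_cast; ring

/-- boundary asymptotics of the explicit global solution
`V(y) = μ - 2 log(1 + (e^μ h/(8(1+N)²)) |y^{N+1} - 1|²)` for `|y| = R ≥ 2`. -/
theorem global_solution_asymptotics (N : ℕ) (h : ℝ) (hh : 0 < h) :
    ∃ C : ℝ, ∀ μ : ℝ, 1 ≤ μ → ∀ R : ℝ, 2 ≤ R → ∀ y : ℂ, ‖y‖ = R →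
      |(μ - 2 * Real.log (1 + Real.exp μ * h / (8 * ((N:ℝ) + 1) ^ 2) * ‖y ^ (N + 1) - 1‖ ^ 2))
          + μ + 2 * Real.log (h / 8) - 4 * Real.log ((N:ℝ) + 1) + 4 * ((N:ℝ) + 1) * Real.log R|
        ≤ C * ((R ^ (N + 1))⁻¹ + Real.exp (-μ)) := by
  set k : ℝ := 8 * ((N:ℝ) + 1) ^ 2 / h with hk
  refine ⟨24 + 8 * k, fun μ _ R hR y hy => ?_⟩
  rw [log_one_add_exp_mul_eq μ hh (by positivity) (sq_nonneg _), abs_mul, abs_neg, abs_two]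
  set p := exp μ * h / (8 * ((N:ℝ) + 1) ^ 2) with hp_def
  set S := R ^ (N + 1)
  have hS : 2 ≤ S := le_self_pow₀ (by linarith) (by omega) |>.trans' hR
  have hzS : ‖y ^ (N + 1)‖ = S := by rw [norm_pow, hy]
  have hz : 0 < ‖y ^ (N + 1)‖ := by rw [hzS]; positivity
  have ha := one_div_four_le_norm_sub_sq_div hz (w := (1 : ℂ)) (by rw [hzS, norm_one]; linarith)
  have ha1 := abs_norm_sub_sq_div_sub_one_le hz (w := (1 : ℂ)) (by rw [hzS, norm_one]; linarith)
  rw [hzS] at ha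
  rw [hzS, norm_one] at ha1
  have hb : (p * S ^ 2)⁻¹ ≤ k * exp (-μ) := by
    have hp_inv : p⁻¹ = k * exp (-μ) := by rw [hp_def, hk, exp_neg]; field_simp
    rw [mul_inv, hp_inv]
    exact mul_le_of_le_one_right (by positivity) (inv_le_one_of_one_le₀ (by nlinarith))
  calc 2 * |log (‖y ^ (N + 1) - 1‖ ^ 2 / S ^ 2 + (p * S ^ 2)⁻¹)|
      ≤ 2 * (4 * (3 * 1 / S + k * exp (-μ))) := by
        gcongr
        exact (abs_log_add_le ha (by positivity)).trans (by gcongr)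
    _ ≤ (24 + 8 * k) * (S⁻¹ + exp (-μ)) := by
        have : 0 ≤ 24 * exp (-μ) + 8 * k * S⁻¹ := by positivity
        linear_combination this
end

section
/- Let N ≥ 0 be an integer, a > 0, and P ∈ ℂ. Then the function z ↦ (1 − a|z^{N+1} − P|²)|z|^{2N}/(1 + a|z^{N+1} − P|²)³ is absolutely integrable on ℂ and ∫_{ℂ} (1 − a|z^{N+1} − P|²)|z|^{2N}/(1 + a|z^{N+1} − P|²)³ dz = 0, where dz denotes the Lebesgue area measure. -/
open MeasureTheory

section Aux

open Real Set Filter Topology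

variable {a : ℝ}

/-- The basic profile function. -/
noncomputable def gfun (a : ℝ) (P : ℂ) (w : ℂ) : ℝ :=
  (1 - a * ‖w - P‖ ^ 2) / (1 + a * ‖w - P‖ ^ 2) ^ 3

lemma gfun_cont (ha : 0 < a) (P : ℂ) : Continuous (gfun a P) := by
  unfold gfun
  refine Continuous.div (by fun_prop) (by fun_prop) fun w => ?_
  positivity

lemma F_le (ha : 0 < a) (P : ℂ) (N : ℕ) (z : ℂ) :
    |(1 - a * ‖z ^ (N + 1) - P‖ ^ 2) * ‖z‖ ^ (2 * N) / (1 + a * ‖z ^ (N + 1) - P‖ ^ 2) ^ 3|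
      ≤ ‖z‖ ^ (2 * N) / (1 + a * ‖z ^ (N + 1) - P‖ ^ 2) ^ 2 := by
  set d := a * ‖z ^ (N + 1) - P‖ ^ 2 with hd
  have hd0 : 0 ≤ d := by positivity
  have h1 : (0:ℝ) < 1 + d := by linarith
  rw [abs_div, abs_of_pos (by positivity : (0:ℝ) < (1+d)^3), abs_mul,
    _root_.abs_of_nonneg (by positivity : (0:ℝ) ≤ ‖z‖ ^ (2*N))]
  have habs : |1 - d| ≤ 1 + d := by
    rw [abs_le]; constructor <;> linarith
  calc |1 - d| * ‖z‖ ^ (2*N) / (1+d)^3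
      ≤ (1+d) * ‖z‖ ^ (2*N) / (1+d)^3 := by gcongr
    _ = ‖z‖ ^ (2*N) / (1+d)^2 := by field_simp

lemma liouville_integrable (N : ℕ) (ha : 0 < a) (P : ℂ) :
    Integrable (fun z : ℂ => (1 - a * ‖z ^ (N + 1) - P‖ ^ 2) * ‖z‖ ^ (2 * N) /
      (1 + a * ‖z ^ (N + 1) - P‖ ^ 2) ^ 3) := by
  have hPn : (0:ℝ) ≤ ‖P‖ := norm_nonneg P
  set R : ℝ := 1 + 2 * ‖P‖ with hR
  have hR1 : (1:ℝ) ≤ R := by simp only [hR]; linarith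
  set C : ℝ := max (R ^ (2*N) * (1+R)^3) (128 / a^2) with hC
  have hC0 : 0 ≤ C := le_trans (by positivity) (le_max_left _ _)
  have hcont : Continuous (fun z : ℂ => (1 - a * ‖z ^ (N + 1) - P‖ ^ 2) * ‖z‖ ^ (2 * N) /
      (1 + a * ‖z ^ (N + 1) - P‖ ^ 2) ^ 3) := by
    refine Continuous.div (by fun_prop) (by fun_prop) fun z => ?_
    positivity
  have hbound : ∀ z : ℂ,
      |(1 - a * ‖z ^ (N + 1) - P‖ ^ 2) * ‖z‖ ^ (2 * N) /
        (1 + a * ‖z ^ (N + 1) - P‖ ^ 2) ^ 3| ≤ C * ((1 + ‖z‖)^3)⁻¹ := by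
    intro z
    have hn0 : (0:ℝ) ≤ ‖z‖ := norm_nonneg z
    have hd0 : (0:ℝ) ≤ a * ‖z ^ (N + 1) - P‖ ^ 2 := by positivity
    have h2 := F_le ha P N z
    have hrw : C * ((1 + ‖z‖)^3)⁻¹ = C / (1 + ‖z‖)^3 := by ring
    rw [hrw]
    rcases le_or_gt ‖z‖ R with h | h
    · refine h2.trans ?_
      have h3 : ‖z‖ ^ (2*N) / (1 + a * ‖z ^ (N + 1) - P‖ ^ 2) ^ 2 ≤ R ^ (2*N) := by
        refine le_trans (div_le_self (by positivity) (one_le_pow₀ (by linarith))) ?_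
        exact pow_le_pow_left₀ hn0 h _
      refine h3.trans ?_
      rw [le_div_iff₀ (by positivity)]
      calc R ^ (2*N) * (1 + ‖z‖)^3 ≤ R ^ (2*N) * (1+R)^3 := by gcongr
        _ ≤ C := le_max_left _ _
    · have hn1 : (1:ℝ) ≤ ‖z‖ := le_trans hR1 h.le
      have hzM : ‖z ^ (N+1)‖ = ‖z‖ ^ (N+1) := norm_pow z (N+1)
      have hself : ‖z‖ ≤ ‖z‖ ^ (N+1) := le_self_pow₀ hn1 (Nat.succ_ne_zero N)
      have hP2 : 2 * ‖P‖ ≤ ‖z‖ ^ (N+1) := by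
        have : R ≤ ‖z‖ := h.le
        simp only [hR] at this
        linarith
      have hlow : ‖z‖ ^ (N+1) / 2 ≤ ‖z ^ (N+1) - P‖ := by
        have h4 := norm_sub_norm_le (z ^ (N+1)) P
        rw [hzM] at h4
        linarith
      have h1d : a * ‖z‖ ^ (2*(N+1)) / 4 ≤ 1 + a * ‖z ^ (N + 1) - P‖ ^ 2 := by
        have h5 : (‖z‖ ^ (N+1) / 2)^2 ≤ ‖z ^ (N+1) - P‖ ^ 2 :=
          pow_le_pow_left₀ (by positivity) hlow 2
        have h6 : (‖z‖ ^ (N+1))^2 = ‖z‖ ^ (2*(N+1)) := by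
          rw [← pow_mul]; ring_nf
        nlinarith [mul_le_mul_of_nonneg_left h5 ha.le]
      refine h2.trans ?_
      have hCge : 128 / a^2 ≤ C := le_max_right _ _
      have key : ‖z‖ ^ (2*N) / (1 + a * ‖z ^ (N + 1) - P‖ ^ 2) ^ 2
          ≤ (128 / a^2) / (1 + ‖z‖)^3 := by
        rw [div_le_div_iff₀ (by positivity) (by positivity)]
        have hsq : a^2 * ‖z‖ ^ (4*(N+1)) / 16
            ≤ (1 + a * ‖z ^ (N + 1) - P‖ ^ 2)^2 := by
          have hmm := mul_le_mul h1d h1d (by positivity) (by positivity)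
          have hnn : ‖z‖ ^ (2*(N+1)) * ‖z‖ ^ (2*(N+1)) = ‖z‖ ^ (4*(N+1)) := by
            rw [← pow_add]; congr 1; omega
          calc a^2 * ‖z‖ ^ (4*(N+1)) / 16
              = (a * ‖z‖ ^ (2*(N+1)) / 4) * (a * ‖z‖ ^ (2*(N+1)) / 4) := by
                rw [← hnn]; ring
            _ ≤ (1 + a * ‖z ^ (N + 1) - P‖ ^ 2) * (1 + a * ‖z ^ (N + 1) - P‖ ^ 2) := hmm
            _ = (1 + a * ‖z ^ (N + 1) - P‖ ^ 2)^2 := by ring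
        have h13 : (1 + ‖z‖)^3 ≤ 8 * ‖z‖^3 := by
          have : 1 + ‖z‖ ≤ 2 * ‖z‖ := by linarith
          calc (1 + ‖z‖)^3 ≤ (2 * ‖z‖)^3 := pow_le_pow_left₀ (by positivity) this 3
            _ = 8 * ‖z‖^3 := by ring
        calc ‖z‖ ^ (2*N) * (1 + ‖z‖)^3
            ≤ ‖z‖ ^ (2*N) * (8 * ‖z‖^3) := by gcongr
          _ = 8 * (‖z‖ ^ (2*N) * ‖z‖^3) := by ring
          _ = 8 * ‖z‖ ^ (2*N+3) := by rw [← pow_add]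
          _ ≤ 8 * ‖z‖ ^ (4*(N+1)) := by
              gcongr
              omega
          _ = 128 / a^2 * (a^2 * ‖z‖ ^ (4*(N+1)) / 16) := by field_simp; ring
          _ ≤ 128 / a^2 * (1 + a * ‖z ^ (N + 1) - P‖ ^ 2)^2 := by gcongr
      refine key.trans ?_
      gcongr
  have hint : Integrable (fun z : ℂ => C * (1 + ‖z‖) ^ (-(3:ℝ))) (volume : Measure ℂ) := by
    refine (integrable_one_add_norm ?_).const_mul C
    rw [Complex.finrank_real_complex]; norm_num
  refine hint.mono hcont.aestronglyMeasurable (Filter.Eventually.of_forall fun z => ?_)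
  rw [Real.norm_eq_abs, Real.norm_eq_abs]
  have hrpow : (1 + ‖z‖) ^ (-(3:ℝ)) = ((1 + ‖z‖)^3)⁻¹ := by
    rw [Real.rpow_neg (by positivity), ← Real.rpow_natCast (1 + ‖z‖) 3]
    norm_num
  have hpos : 0 ≤ C * (1 + ‖z‖) ^ (-(3:ℝ)) := by positivity
  rw [_root_.abs_of_nonneg hpos, hrpow]
  exact hbound z

lemma radial_zero (ha : 0 < a) :
    ∫ r in Ioi (0:ℝ), r * ((1 - a * r ^ 2) / (1 + a * r ^ 2) ^ 3) = 0 := by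
  have hden : ∀ r : ℝ, (0:ℝ) < 1 + a * r ^ 2 := fun r => by positivity
  -- antiderivative
  have hΦ : ∀ r : ℝ, HasDerivAt (fun r : ℝ => r^2 / (2 * (1 + a * r^2)^2))
      (r * ((1 - a * r ^ 2) / (1 + a * r ^ 2) ^ 3)) r := by
    intro r
    have h1 : HasDerivAt (fun r : ℝ => r^2) (2*r) r := by
      simpa using hasDerivAt_pow 2 r
    have h2 : HasDerivAt (fun r : ℝ => 1 + a * r^2) (a * (2*r)) r :=
      (h1.const_mul a).const_add 1
    have h3 : HasDerivAt (fun r : ℝ => 2 * (1 + a * r^2)^2)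
        (2 * ((2:ℕ) * (1 + a * r^2)^1 * (a * (2*r)))) r := (h2.pow 2).const_mul 2
    have h4 := h1.div h3 (by positivity)
    refine h4.congr_deriv ?_
    have h5 := hden r
    field_simp
    ring
  -- integrability of the integrand
  have hq : IntegrableOn (fun r : ℝ => r / (1 + a * r^2)^2) (Ioi 0) := by
    have hG : ∀ r : ℝ, HasDerivAt (fun r : ℝ => -(2 * a * (1 + a * r^2))⁻¹)
        (r / (1 + a * r^2)^2) r := by
      intro r
      have h1 : HasDerivAt (fun r : ℝ => r^2) (2*r) r := by
        simpa using hasDerivAt_pow 2 r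
      have h2 : HasDerivAt (fun r : ℝ => 2 * a * (1 + a * r^2))
          (2 * a * (a * (2*r))) r := ((h1.const_mul a).const_add 1).const_mul (2*a)
      have h3 := (h2.inv (by positivity)).neg
      refine h3.congr_deriv ?_
      have h5 := hden r
      field_simp
    have htop : Tendsto (fun r : ℝ => 2 * a * (1 + a * r^2)) atTop atTop := by
      have t1 : Tendsto (fun r : ℝ => r^2) atTop atTop :=
        tendsto_pow_atTop two_ne_zero
      have t2 : Tendsto (fun r : ℝ => a * r^2) atTop atTop := t1.const_mul_atTop ha
      have t3 : Tendsto (fun r : ℝ => 1 + a * r^2) atTop atTop :=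
        tendsto_atTop_add_const_left _ 1 t2
      exact t3.const_mul_atTop (by positivity)
    have hGtend : Tendsto (fun r : ℝ => -(2 * a * (1 + a * r^2))⁻¹) atTop (𝓝 0) := by
      have := htop.inv_tendsto_atTop.neg
      simpa using this
    exact integrableOn_Ioi_deriv_of_nonneg' (g' := fun r : ℝ => r / (1 + a * r^2)^2)
      (fun x _ => hG x) (fun x hx => le_of_lt (div_pos hx (by positivity))) hGtend
  have hf'int : IntegrableOn (fun r : ℝ => r * ((1 - a * r ^ 2) / (1 + a * r ^ 2) ^ 3))
      (Ioi 0) := by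
    have hcont : Continuous (fun r : ℝ => r * ((1 - a * r ^ 2) / (1 + a * r ^ 2) ^ 3)) := by
      refine continuous_id.mul (Continuous.div (by fun_prop) (by fun_prop) fun r => ?_)
      positivity
    refine hq.mono' hcont.aestronglyMeasurable
      ((ae_restrict_iff' measurableSet_Ioi).mpr (Filter.Eventually.of_forall fun r hr => ?_))
    have h5 := hden r
    have hr0 : (0:ℝ) < r := hr
    rw [Real.norm_eq_abs, abs_mul, abs_div, abs_of_pos (by positivity : (0:ℝ) < (1+a*r^2)^3)]
    have habs : |1 - a * r^2| ≤ 1 + a * r^2 := by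
      rw [abs_le]; constructor <;> nlinarith [sq_nonneg r]
    calc |r| * (|1 - a * r^2| / (1 + a * r^2)^3)
        ≤ |r| * ((1 + a * r^2) / (1 + a * r^2)^3) := by gcongr
      _ = |r| / (1 + a * r^2)^2 := by field_simp
      _ = r / (1 + a * r^2)^2 := by rw [abs_of_pos hr0]
  -- limit of the antiderivative at infinity
  have hΦtop : Tendsto (fun r : ℝ => r^2 / (2 * (1 + a * r^2)^2)) atTop (𝓝 0) := by
    have hb : Tendsto (fun r : ℝ => (2 * a^2 * r^2)⁻¹) atTop (𝓝 0) := by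
      refine Tendsto.inv_tendsto_atTop ?_
      exact (tendsto_pow_atTop two_ne_zero).const_mul_atTop (by positivity)
    refine tendsto_of_tendsto_of_tendsto_of_le_of_le' tendsto_const_nhds hb ?_ ?_
    · exact Filter.Eventually.of_forall fun r => by positivity
    · filter_upwards [eventually_ge_atTop (1:ℝ)] with r hr
      have h5 := hden r
      rw [inv_eq_one_div, div_le_div_iff₀ (by positivity) (by positivity)]
      nlinarith [sq_nonneg r, mul_nonneg ha.le (sq_nonneg r)]
  have := integral_Ioi_of_hasDerivAt_of_tendsto' (fun x _ => hΦ x) hf'int hΦtop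
  simpa using this

lemma g0_zero (ha : 0 < a) :
    ∫ w : ℂ, (1 - a * ‖w‖ ^ 2) / (1 + a * ‖w‖ ^ 2) ^ 3 = 0 := by
  have h := MeasureTheory.integral_fun_norm_addHaar (volume : Measure ℂ)
    (fun y : ℝ => (1 - a * y ^ 2) / (1 + a * y ^ 2) ^ 3)
  simp only [Complex.finrank_real_complex, smul_eq_mul, nsmul_eq_mul, Nat.cast_ofNat,
    pow_one] at h
  rw [h]
  have h2 : ∫ (y : ℝ) in Ioi 0, y ^ (2 - 1) * ((1 - a * y ^ 2) / (1 + a * y ^ 2) ^ 3) = 0 := by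
    simpa using radial_zero ha
  rw [h2]
  simp

lemma gP_zero (ha : 0 < a) (P : ℂ) : ∫ w : ℂ, gfun a P w = 0 := by
  have h := MeasureTheory.integral_sub_right_eq_self (μ := (volume : Measure ℂ))
    (fun w : ℂ => (1 - a * ‖w‖ ^ 2) / (1 + a * ‖w‖ ^ 2) ^ 3) P
  exact h.trans (g0_zero ha)

lemma polar_integrableOn {f : ℂ → ℝ} (hf : Integrable f) :
    IntegrableOn (fun p : ℝ × ℝ => p.1 • f (Complex.polarCoord.symm p)) polarCoord.target := by
  have hF2 : Integrable (f ∘ Complex.measurableEquivRealProd.symm) :=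
    ((Complex.volume_preserving_equiv_real_prod.symm).integrable_comp_emb
      Complex.measurableEquivRealProd.symm.measurableEmbedding).mpr hf
  have key := integrableOn_image_iff_integrableOn_abs_det_fderiv_smul (volume : Measure (ℝ × ℝ))
    polarCoord.open_target.measurableSet
    (fun p _ => (hasFDerivAt_polarCoord_symm p).hasFDerivWithinAt)
    polarCoord.symm.injOn (f ∘ Complex.measurableEquivRealProd.symm)
  rw [polarCoord.symm_image_target_eq_source] at key
  have h2 := key.mp hF2.integrableOn
  refine (h2.congr_fun (fun p hp => ?_) polarCoord.open_target.measurableSet)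
  have hdet : ((LinearMap.toContinuousLinearMap (Matrix.toLin (Module.Basis.finTwoProd ℝ)
      (Module.Basis.finTwoProd ℝ)
      !![cos p.2, -p.1 * sin p.2; sin p.2, p.1 * cos p.2]))).det = p.1 := by
    conv_rhs => rw [← one_mul p.1, ← cos_sq_add_sin_sq p.2]
    simp only [neg_mul, LinearMap.det_toContinuousLinearMap, LinearMap.det_toLin,
      Matrix.det_fin_two_of, sub_neg_eq_add]
    ring
  have hp1 : 0 < p.1 := hp.1
  simp only [det_fderivPolarCoordSymm, abs_of_pos hp1]
  rfl

lemma symm_eval (p : ℝ × ℝ) :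
    Complex.polarCoord.symm p = (p.1 : ℂ) * Complex.exp ((p.2 : ℂ) * Complex.I) := by
  rw [Complex.polarCoord_symm_apply, Complex.exp_mul_I]
  norm_cast

lemma norm_eval (s θ : ℝ) : ‖(s : ℂ) * Complex.exp ((θ : ℂ) * Complex.I)‖ = |s| := by
  rw [norm_mul, Complex.norm_exp_ofReal_mul_I,
    Complex.norm_real, Real.norm_eq_abs, mul_one]

lemma pow_eval (s θ : ℝ) (M : ℕ) :
    ((s : ℂ) * Complex.exp ((θ : ℂ) * Complex.I)) ^ M
      = ((s ^ M : ℝ) : ℂ) * Complex.exp (((M * θ : ℝ) : ℂ) * Complex.I) := by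
  rw [mul_pow, ← Complex.exp_nat_mul]
  push_cast
  ring_nf

/-- The angular average. -/
noncomputable def Jfun (a : ℝ) (P : ℂ) (s : ℝ) : ℝ :=
  ∫ θ in Ioo (-π) π, gfun a P ((s : ℂ) * Complex.exp ((θ : ℂ) * Complex.I))

lemma angle_average (ha : 0 < a) (P : ℂ) {M : ℕ} (hM : M ≠ 0) (s : ℝ) :
    ∫ θ in Ioo (-π) π, gfun a P ((s : ℂ) * Complex.exp (((M * θ : ℝ) : ℂ) * Complex.I))
      = Jfun a P s := by
  set G : ℝ → ℝ := fun θ => gfun a P ((s : ℂ) * Complex.exp ((θ : ℂ) * Complex.I)) with hG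
  have hGcont : Continuous G := by
    apply (gfun_cont ha P).comp
    fun_prop
  have hper : Function.Periodic G (2 * π) := by
    intro θ
    simp only [hG]
    congr 2
    have h1 : ((θ + 2 * π : ℝ) : ℂ) * Complex.I = (θ : ℂ) * Complex.I + 2 * π * Complex.I := by
      push_cast; ring
    rw [h1, Complex.exp_add, Complex.exp_two_pi_mul_I, mul_one]
  have hint : ∀ t₁ t₂ : ℝ, IntervalIntegrable G volume t₁ t₂ := fun t₁ t₂ =>
    hGcont.intervalIntegrable t₁ t₂
  have hpi : -π ≤ π := by linarith [Real.pi_pos]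
  have hM0 : ((M : ℝ)) ≠ 0 := Nat.cast_ne_zero.mpr hM
  calc ∫ θ in Ioo (-π) π, gfun a P ((s : ℂ) * Complex.exp (((M * θ : ℝ) : ℂ) * Complex.I))
      = ∫ θ in (-π)..π, G ((M : ℝ) * θ) := by
        rw [intervalIntegral.integral_of_le hpi, integral_Ioc_eq_integral_Ioo]
    _ = ((M : ℝ))⁻¹ • ∫ θ in ((M : ℝ) * (-π))..((M : ℝ) * π), G θ :=
        intervalIntegral.integral_comp_mul_left G hM0
    _ = ((M : ℝ))⁻¹ • ((M : ℤ) • ∫ θ in (-π)..(-π + 2 * π), G θ) := by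
        have e1 : (M : ℝ) * π = (M : ℝ) * (-π) + (M : ℤ) • (2 * π) := by
          rw [zsmul_eq_mul]; push_cast; ring
        rw [e1, hper.intervalIntegral_add_zsmul_eq (M : ℤ) ((M : ℝ) * (-π)) hint,
          hper.intervalIntegral_add_eq ((M : ℝ) * (-π)) (-π)]
    _ = ∫ θ in (-π)..π, G θ := by
        have e2 : -π + 2 * π = π := by ring
        rw [e2, zsmul_eq_mul, smul_eq_mul]
        push_cast
        rw [← mul_assoc, inv_mul_cancel₀ hM0, one_mul]
    _ = Jfun a P s := by
        rw [intervalIntegral.integral_of_le hpi, integral_Ioc_eq_integral_Ioo]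
        rfl

end Aux

open Real Set Filter Topology

/-- differentiating the total mass of the global Liouville bubble in the
height parameter gives zero:
`∫_ℂ (1 - a|z^{N+1}-P|²)|z|^{2N}/(1 + a|z^{N+1}-P|²)³ dz = 0`. -/
theorem mass_derivative_height_zero (N : ℕ) (a : ℝ) (ha : 0 < a) (P : ℂ) :
    Integrable (fun z : ℂ =>
      (1 - a * ‖z ^ (N + 1) - P‖ ^ 2) * ‖z‖ ^ (2 * N) / (1 + a * ‖z ^ (N + 1) - P‖ ^ 2) ^ 3) ∧
    ∫ z : ℂ,
      (1 - a * ‖z ^ (N + 1) - P‖ ^ 2) * ‖z‖ ^ (2 * N) / (1 + a * ‖z ^ (N + 1) - P‖ ^ 2) ^ 3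
      = 0 := by
  refine ⟨liouville_integrable N ha P, ?_⟩
  have hFeq : ∀ z : ℂ, (1 - a * ‖z ^ (N + 1) - P‖ ^ 2) * ‖z‖ ^ (2 * N) /
      (1 + a * ‖z ^ (N + 1) - P‖ ^ 2) ^ 3 = gfun a P (z ^ (N + 1)) * ‖z‖ ^ (2 * N) :=
    fun z => (div_mul_eq_mul_div _ _ _).symm
  have hM : N + 1 ≠ 0 := Nat.succ_ne_zero N
  have hMr : ((N + 1 : ℕ) : ℝ) ≠ 0 := Nat.cast_ne_zero.mpr hM
  have hMpos : (0:ℝ) < ((N + 1 : ℕ) : ℝ) := by positivity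
  -- integrability facts
  have hgi : Integrable (gfun a P) := by
    have h0 := liouville_integrable 0 ha P
    simp at h0
    exact h0
  have hFi : Integrable (fun z : ℂ => gfun a P (z ^ (N + 1)) * ‖z‖ ^ (2 * N)) := by
    have h1 := liouville_integrable N ha P
    simpa only [hFeq] using h1
  have hpolarF := polar_integrableOn hFi
  have hpolarg := polar_integrableOn hgi
  rw [polarCoord_target] at hpolarF hpolarg
  -- link between the radial integral of J and the integral of gfun
  have hJg : ∫ s in Ioi (0:ℝ), s * Jfun a P s = ∫ w : ℂ, gfun a P w := by
    rw [← Complex.integral_comp_polarCoord_symm (gfun a P), polarCoord_target,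
      Measure.volume_eq_prod, setIntegral_prod _ hpolarg]
    refine (setIntegral_congr_fun measurableSet_Ioi fun r hr => ?_)
    calc r * Jfun a P r
        = r • ∫ θ in Ioo (-π) π, gfun a P ((r : ℂ) * Complex.exp ((θ : ℂ) * Complex.I)) := rfl
      _ = ∫ θ in Ioo (-π) π, r • gfun a P ((r : ℂ) * Complex.exp ((θ : ℂ) * Complex.I)) :=
          (integral_smul r _).symm
      _ = ∫ θ in Ioo (-π) π, (r, θ).1 • gfun a P (Complex.polarCoord.symm (r, θ)) := by
          refine setIntegral_congr_fun measurableSet_Ioo fun θ _ => ?_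
          rw [symm_eval]
  -- the substitution s = r ^ (N+1)
  have houter : ∫ r in Ioi (0:ℝ), r ^ (2 * N + 1) * Jfun a P (r ^ (N + 1))
      = ((N + 1 : ℕ) : ℝ)⁻¹ * ∫ s in Ioi (0:ℝ), s * Jfun a P s := by
    have key := integral_comp_rpow_Ioi (fun y => ((N + 1 : ℕ) : ℝ)⁻¹ • (y * Jfun a P y)) hMr
    rw [integral_smul, smul_eq_mul] at key
    rw [← key]
    refine setIntegral_congr_fun measurableSet_Ioi fun x hx => ?_
    have hx0 : (0:ℝ) < x := hx
    have e1 : ((N + 1 : ℕ) : ℝ) - 1 = (N : ℝ) := by push_cast; ring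
    simp only [smul_eq_mul, e1, Real.rpow_natCast, abs_of_pos hMpos]
    field_simp
    ring
  -- main computation
  calc ∫ z : ℂ, (1 - a * ‖z ^ (N + 1) - P‖ ^ 2) * ‖z‖ ^ (2 * N) /
        (1 + a * ‖z ^ (N + 1) - P‖ ^ 2) ^ 3
      = ∫ z : ℂ, gfun a P (z ^ (N + 1)) * ‖z‖ ^ (2 * N) := by simp only [hFeq]
    _ = ∫ p in polarCoord.target,
          p.1 • (gfun a P ((Complex.polarCoord.symm p) ^ (N + 1)) *
            ‖Complex.polarCoord.symm p‖ ^ (2 * N)) :=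
        (Complex.integral_comp_polarCoord_symm
          (fun z => gfun a P (z ^ (N + 1)) * ‖z‖ ^ (2 * N))).symm
    _ = ∫ r in Ioi (0:ℝ), ∫ θ in Ioo (-π) π,
          (r, θ).1 • (gfun a P ((Complex.polarCoord.symm (r, θ)) ^ (N + 1)) *
            ‖Complex.polarCoord.symm (r, θ)‖ ^ (2 * N)) := by
        rw [polarCoord_target, Measure.volume_eq_prod]
        exact setIntegral_prod _ hpolarF
    _ = ∫ r in Ioi (0:ℝ), r ^ (2 * N + 1) * Jfun a P (r ^ (N + 1)) := by
        refine setIntegral_congr_fun measurableSet_Ioi fun r hr => ?_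
        have hr0 : (0:ℝ) < r := hr
        have h1 : ∀ θ : ℝ, (r, θ).1 • (gfun a P ((Complex.polarCoord.symm (r, θ)) ^ (N + 1)) *
            ‖Complex.polarCoord.symm (r, θ)‖ ^ (2 * N))
            = r ^ (2 * N + 1) * gfun a P (((r ^ (N + 1) : ℝ) : ℂ) *
                Complex.exp (((((N + 1 : ℕ) : ℝ) * θ : ℝ) : ℂ) * Complex.I)) := by
          intro θ
          simp only [symm_eval, pow_eval, norm_eval, smul_eq_mul]
          rw [abs_of_pos hr0]
          push_cast
          ring
        simp only [h1]
        rw [MeasureTheory.integral_const_mul, angle_average ha P hM (r ^ (N + 1))]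
    _ = ((N + 1 : ℕ) : ℝ)⁻¹ * ∫ s in Ioi (0:ℝ), s * Jfun a P s := houter
    _ = 0 := by rw [hJg, gP_zero ha P, mul_zero]
end

section
/- Let N ≥ 0 be an integer, a > 0, and P ∈ ℂ. Then the complex-valued function z ↦ (z^{N+1} − P)|z|^{2N}/(1 + a|z^{N+1} − P|²)³ is absolutely integrable on ℂ and ∫_{ℂ} (z^{N+1} − P)|z|^{2N}/(1 + a|z^{N+1} − P|²)³ dz = 0 (hence also the integral of its complex conjugate vanishes), where dz denotes the Lebesgue area measure. -/
open MeasureTheory Set Real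

namespace MassDerivAux

noncomputable def gP (a : ℝ) (P w : ℂ) : ℂ → ℂ :=
  fun z => (w * z - P) * (((1 : ℝ) / (1 + a * ‖w * z - P‖ ^ 2) ^ 3 : ℝ) : ℂ)

lemma rot_zero (a : ℝ) (P w : ℂ) (hw : ‖w‖ = 1) : ∫ z : ℂ, gP a P w z = 0 := by
  have hw0 : w ≠ 0 := by
    intro h; rw [h, norm_zero] at hw; norm_num at hw
  have h1 : ∫ z : ℂ, gP a P w z = ∫ z : ℂ, gP a P w (z + w⁻¹ * P) :=
    (integral_add_right_eq_self (gP a P w) (w⁻¹ * P)).symm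
  have h2 : ∀ z : ℂ, gP a P w (z + w⁻¹ * P)
      = (w * z) * (((1 : ℝ) / (1 + a * ‖z‖ ^ 2) ^ 3 : ℝ) : ℂ) := by
    intro z
    have : w * (z + w⁻¹ * P) - P = w * z := by
      rw [mul_add, mul_inv_cancel_left₀ hw0]; ring
    simp only [gP, this, norm_mul, hw, one_mul]
  rw [h1]
  simp only [h2]
  set f : ℂ → ℂ := fun z => (w * z) * (((1 : ℝ) / (1 + a * ‖z‖ ^ 2) ^ 3 : ℝ) : ℂ) with hf
  have hodd := integral_neg_eq_self f (volume : Measure ℂ)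
  have : ∫ z : ℂ, f (-z) = -∫ z : ℂ, f z := by
    have : ∀ z : ℂ, f (-z) = -f z := by
      intro z; simp only [hf, norm_neg, mul_neg, neg_mul]
    simp only [this, integral_neg]
  rw [this] at hodd
  linear_combination (-1/2 : ℂ) * hodd

lemma key_bound (a : ℝ) (ha : 0 < a) (p : ℝ) (hp : 0 ≤ p) (N : ℕ) :
    ∃ C : ℝ, 0 < C ∧ ∀ t u : ℝ, 0 ≤ t → 0 ≤ u → t ^ (N + 1) ≤ u + p →
      u * t ^ (2 * N) * (1 + t) ^ 3 ≤ C * (1 + a * u ^ 2) ^ 3 := by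
  refine ⟨8 * (1 + 1/a) + 32 * (1/a^2 + (1 + 1/a) * p^3) + 1, by positivity, ?_⟩
  intro t u ht hu htu
  set D : ℝ := 1 + a * u ^ 2 with hDdef
  have hau : 0 ≤ a * u ^ 2 := by positivity
  have hD1 : 1 ≤ D := by simp only [hDdef]; linarith
  have hD0 : 0 < D := by linarith
  have hD23 : D^2 ≤ D^3 := pow_le_pow_right₀ hD1 (by norm_num)
  have hD3 : D ≤ D ^ 3 := le_trans (by nlinarith [mul_nonneg hD0.le (sub_nonneg.2 hD1)]) hD23
  have hexp : (1 + 1/a) * D = 1 + a*u^2 + 1/a + u^2 := by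
    simp only [hDdef]; field_simp; ring
  have hua : u ≤ (1 + 1/a) * D := by
    have h1 : u ≤ 1 + u^2 := by nlinarith [sq_nonneg (u - 1)]
    have h2 : (0:ℝ) ≤ 1/a := by positivity
    linarith
  have hu4 : u^4 ≤ (1/a^2) * D^3 := by
    have e1 : (a*u^2)^2 ≤ D^2 := pow_le_pow_left₀ hau (by linarith) 2
    have e2 : (a*u^2)^2 = a^2 * u^4 := by ring
    rw [div_mul_eq_mul_div, le_div_iff₀ (by positivity)]
    calc u^4 * a^2 = (a*u^2)^2 := by ring
      _ ≤ D^2 := e1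
      _ ≤ D^3 := hD23
      _ = 1 * D^3 := by ring
  rcases le_total t 1 with h1 | h1
  · -- small t
    have hA : t ^ (2*N) ≤ 1 := pow_le_one₀ ht h1
    have hB : (1 + t) ^ 3 ≤ 8 := by
      have : (1+t)^3 ≤ 2^3 := pow_le_pow_left₀ (by linarith) (by linarith) 3
      norm_num at this; linarith
    have hchain : u * t ^ (2*N) * (1+t)^3 ≤ u * 1 * 8 := by
      apply mul_le_mul _ hB (by positivity) (by positivity)
      exact mul_le_mul le_rfl hA (by positivity) hu
    have hstep : 8 * ((1 + 1/a) * D) ≤ 8 * ((1 + 1/a) * D^3) := by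
      have := mul_le_mul_of_nonneg_left hD3 (by positivity : (0:ℝ) ≤ 1 + 1/a)
      linarith
    calc u * t ^ (2*N) * (1+t)^3 ≤ u * 1 * 8 := hchain
      _ = 8 * u := by ring
      _ ≤ 8 * ((1 + 1/a) * D) := by linarith
      _ ≤ 8 * ((1 + 1/a) * D^3) := hstep
      _ = (8 * (1 + 1/a)) * D^3 := by ring
      _ ≤ (8 * (1 + 1/a) + 32 * (1/a^2 + (1 + 1/a) * p^3) + 1) * D^3 := by
          apply mul_le_mul_of_nonneg_right _ (by positivity)
          have : (0:ℝ) ≤ 32 * (1/a^2 + (1 + 1/a) * p^3) := by positivity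
          linarith
  · -- large t
    have hs : t ^ (2*N) * (1+t)^3 ≤ 8 * (t^(N+1))^3 := by
      have e1 : (1+t)^3 ≤ (2*t)^3 := pow_le_pow_left₀ (by linarith) (by linarith) 3
      have e3 : t ^ (2*N+3) ≤ t ^ (3*N+3) := pow_le_pow_right₀ h1 (by omega)
      have e4 : t ^ (3*N+3) = (t^(N+1))^3 := by rw [← pow_mul]; ring_nf
      calc t ^ (2*N) * (1+t)^3 ≤ t ^ (2*N) * (2*t)^3 :=
            mul_le_mul_of_nonneg_left e1 (by positivity)
        _ = 8 * t ^ (2*N+3) := by rw [pow_add]; ring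
        _ ≤ 8 * t ^ (3*N+3) := by linarith
        _ = 8 * (t^(N+1))^3 := by rw [e4]
    have hs2 : (t^(N+1))^3 ≤ (u+p)^3 := pow_le_pow_left₀ (by positivity) htu 3
    have h5 : u * (u+p)^3 ≤ 4*u^4 + 4*(u*p^3) := by
      nlinarith [mul_nonneg (mul_nonneg hu (sq_nonneg (u-p))) (add_nonneg hu hp)]
    have h6 : u * p^3 ≤ (1 + 1/a) * p^3 * D^3 := by
      have e5 : u * p^3 ≤ ((1 + 1/a) * D) * p^3 :=
        mul_le_mul_of_nonneg_right hua (by positivity)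
      have e6 : ((1 + 1/a) * D) * p^3 ≤ ((1 + 1/a) * D^3) * p^3 := by
        have := mul_le_mul_of_nonneg_left hD3 (by positivity : (0:ℝ) ≤ 1 + 1/a)
        exact mul_le_mul_of_nonneg_right this (by positivity)
      calc u * p^3 ≤ ((1 + 1/a) * D) * p^3 := e5
        _ ≤ ((1 + 1/a) * D^3) * p^3 := e6
        _ = (1 + 1/a) * p^3 * D^3 := by ring
    calc u * t ^ (2*N) * (1+t)^3 = u * (t ^ (2*N) * (1+t)^3) := by ring
      _ ≤ u * (8 * (u+p)^3) := mul_le_mul_of_nonneg_left (le_trans hs (by linarith)) hu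
      _ = 8 * (u * (u+p)^3) := by ring
      _ ≤ 8 * (4*u^4 + 4*(u*p^3)) := by linarith
      _ = 32 * u^4 + 32 * (u * p^3) := by ring
      _ ≤ 32 * ((1/a^2) * D^3) + 32 * ((1 + 1/a) * p^3 * D^3) := by linarith
      _ = (32 * (1/a^2 + (1 + 1/a) * p^3)) * D^3 := by ring
      _ ≤ (8 * (1 + 1/a) + 32 * (1/a^2 + (1 + 1/a) * p^3) + 1) * D^3 := by
          apply mul_le_mul_of_nonneg_right _ (by positivity)
          have : (0:ℝ) ≤ 8 * (1 + 1/a) := by positivity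
          linarith

lemma integrable_of_cube_bound {f : ℂ → ℂ} (hf : AEStronglyMeasurable f volume) (C : ℝ)
    (hb : ∀ z, ‖f z‖ ≤ C * ((1 + ‖z‖) ^ 3)⁻¹) : Integrable f := by
  have h0 : Integrable (fun z : ℂ => C * (1 + ‖z‖) ^ (-(3:ℝ))) := by
    exact (integrable_one_add_norm (by
      simp only [Complex.finrank_real_complex]; norm_num)).const_mul C
  have heq : (fun z : ℂ => C * (1 + ‖z‖) ^ (-(3:ℝ)))
      = fun z : ℂ => C * ((1 + ‖z‖) ^ 3)⁻¹ := by
    funext z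
    rw [Real.rpow_neg (by positivity), ← Real.rpow_natCast (1 + ‖z‖) 3]
    norm_num
  rw [heq] at h0
  exact h0.mono' hf (Filter.Eventually.of_forall hb)

lemma denom_pos (a : ℝ) (ha : 0 < a) (x : ℝ) : 0 < 1 + a * x ^ 2 :=
  add_pos_of_pos_of_nonneg one_pos (mul_nonneg ha.le (sq_nonneg x))

lemma gP_continuous (a : ℝ) (ha : 0 < a) (P w : ℂ) : Continuous (gP a P w) := by
  apply Continuous.mul
  · exact (continuous_const.mul continuous_id).sub continuous_const
  · apply Complex.continuous_ofReal.comp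
    apply Continuous.div continuous_const
    · fun_prop
    · intro z
      exact pow_ne_zero 3 (denom_pos a ha _).ne'

lemma gP_integrable (a : ℝ) (ha : 0 < a) (P w : ℂ) (hw : ‖w‖ = 1) :
    Integrable (gP a P w) := by
  obtain ⟨C, hC, hkey⟩ := key_bound a ha ‖P‖ (norm_nonneg P) 0
  apply integrable_of_cube_bound (C := C)
  · exact (gP_continuous a ha P w).aestronglyMeasurable
  · intro z
    set u : ℝ := ‖w * z - P‖ with hu
    set t : ℝ := ‖z‖ with htd
    have ht : ‖w * z‖ = t := by rw [norm_mul, hw, one_mul]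
    have hnorm : ‖gP a P w z‖ = u * ((1 : ℝ) / (1 + a * u ^ 2) ^ 3) := by
      rw [gP, norm_mul, Complex.norm_real, Real.norm_of_nonneg (by positivity)]
    have htu : t ^ (0 + 1) ≤ u + ‖P‖ := by
      have : ‖w * z‖ ≤ ‖w * z - P‖ + ‖P‖ := by
        calc ‖w * z‖ = ‖(w * z - P) + P‖ := by ring_nf
          _ ≤ ‖w * z - P‖ + ‖P‖ := norm_add_le _ _
      rw [ht] at this; simpa using this
    have hb := hkey t u (norm_nonneg z) (norm_nonneg _) htu
    rw [hnorm]
    have hDpos := denom_pos a ha u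
    have h1t : (0:ℝ) < (1 + t) := by have := norm_nonneg z; rw [← htd] at this; linarith
    rw [one_div, ← div_eq_mul_inv, ← div_eq_mul_inv,
      div_le_div_iff₀ (by positivity) (by positivity)]
    calc u * (1 + t)^3 = u * t ^ (2 * 0) * (1+t)^3 := by norm_num
      _ ≤ C * (1 + a * u ^ 2) ^ 3 := hb

lemma F_integrable (N : ℕ) (a : ℝ) (ha : 0 < a) (P : ℂ) :
    Integrable (fun z : ℂ =>
      (z ^ (N + 1) - P) * ((‖z‖ ^ (2 * N) / (1 + a * ‖z ^ (N + 1) - P‖ ^ 2) ^ 3 : ℝ) : ℂ)) := by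
  obtain ⟨C, hC, hkey⟩ := key_bound a ha ‖P‖ (norm_nonneg P) N
  apply integrable_of_cube_bound (C := C)
  · apply Continuous.aestronglyMeasurable
    apply Continuous.mul
    · exact (continuous_pow (N+1)).sub continuous_const
    · apply Complex.continuous_ofReal.comp
      apply Continuous.div
      · fun_prop
      · fun_prop
      · intro z
        exact pow_ne_zero 3 (denom_pos a ha _).ne'
  · intro z
    set u : ℝ := ‖z ^ (N + 1) - P‖ with hu
    set t : ℝ := ‖z‖ with htd
    have hnorm : ‖(z ^ (N + 1) - P) * ((‖z‖ ^ (2 * N) / (1 + a * ‖z ^ (N + 1) - P‖ ^ 2) ^ 3 : ℝ) : ℂ)‖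
        = u * (t ^ (2 * N) / (1 + a * u ^ 2) ^ 3) := by
      rw [norm_mul, Complex.norm_real, Real.norm_of_nonneg (by positivity)]
    have htu : t ^ (N + 1) ≤ u + ‖P‖ := by
      have h1 : ‖z ^ (N+1)‖ ≤ ‖z ^ (N+1) - P‖ + ‖P‖ := by
        calc ‖z ^ (N+1)‖ = ‖(z ^ (N+1) - P) + P‖ := by ring_nf
          _ ≤ ‖z ^ (N+1) - P‖ + ‖P‖ := norm_add_le _ _
      rw [norm_pow] at h1
      exact h1
    have hb := hkey t u (norm_nonneg z) (norm_nonneg _) htu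
    rw [hnorm]
    have hDpos := denom_pos a ha u
    have h1t : (0:ℝ) < (1 + t) := by have := norm_nonneg z; rw [← htd] at this; linarith
    rw [← mul_div_assoc, ← div_eq_mul_inv,
      div_le_div_iff₀ (by positivity) (by positivity)]
    exact hb

lemma integrableOn_polar_real {f : ℝ × ℝ → ℂ} (hf : Integrable f) :
    IntegrableOn (fun p : ℝ × ℝ => p.1 • f (polarCoord.symm p)) polarCoord.target := by
  set B : ℝ × ℝ → ℝ × ℝ →L[ℝ] ℝ × ℝ := fun p =>
    LinearMap.toContinuousLinearMap (Matrix.toLin (Module.Basis.finTwoProd ℝ) (Module.Basis.finTwoProd ℝ)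
      !![cos p.2, -p.1 * sin p.2; sin p.2, p.1 * cos p.2])
  have A : ∀ p ∈ polarCoord.target, HasFDerivWithinAt polarCoord.symm (B p) polarCoord.target p :=
    fun p _ => (hasFDerivAt_polarCoord_symm p).hasFDerivWithinAt
  have B_det : ∀ p, (B p).det = p.1 := by
    intro p
    conv_rhs => rw [← one_mul p.1, ← cos_sq_add_sin_sq p.2]
    simp only [B, neg_mul, LinearMap.det_toContinuousLinearMap, LinearMap.det_toLin,
      Matrix.det_fin_two_of, sub_neg_eq_add]
    ring
  have hinj : InjOn polarCoord.symm polarCoord.target := polarCoord.symm.injOn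
  have himg : IntegrableOn f (polarCoord.symm '' polarCoord.target) := hf.integrableOn
  have h := (integrableOn_image_iff_integrableOn_abs_det_fderiv_smul volume
    polarCoord.open_target.measurableSet A hinj f).mp himg
  apply h.congr_fun _ polarCoord.open_target.measurableSet
  intro p hp
  simp only
  rw [B_det, abs_of_pos hp.1]

lemma integrableOn_polar {f : ℂ → ℂ} (hf : Integrable f) :
    IntegrableOn (fun p : ℝ × ℝ => p.1 • f (Complex.polarCoord.symm p)) polarCoord.target := by
  have hf' : Integrable (f ∘ Complex.measurableEquivRealProd.symm) :=
    ((Complex.volume_preserving_equiv_real_prod.symm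
        Complex.measurableEquivRealProd).integrable_comp
      hf.aestronglyMeasurable).mpr hf
  have h := integrableOn_polar_real hf'
  apply h.congr_fun _ polarCoord.open_target.measurableSet
  intro p hp
  simp only [Function.comp_apply]
  congr 1

lemma prod_Ioc_ae_eq_target :
    (Ioi (0:ℝ) ×ˢ Ioc (-π) π : Set (ℝ × ℝ)) =ᵐ[volume] polarCoord.target := by
  have htar : polarCoord.target = Ioi (0:ℝ) ×ˢ Ioo (-π) π := rfl
  rw [htar, MeasureTheory.ae_eq_set]
  constructor
  · apply measure_mono_null (t := (univ ×ˢ {π} : Set (ℝ × ℝ)))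
    · rintro ⟨r, θ⟩ ⟨h1, h2⟩
      simp only [mem_prod, mem_Ioi, mem_Ioc, mem_Ioo] at h1 h2
      constructor
      · trivial
      · simp only [mem_singleton_iff]
        by_contra hne
        exact h2 ⟨h1.1, ⟨h1.2.1, lt_of_le_of_ne h1.2.2 hne⟩⟩
    · rw [Measure.volume_eq_prod, Measure.prod_prod, Real.volume_singleton, mul_zero]
  · have : (Ioi (0:ℝ) ×ˢ Ioo (-π) π : Set (ℝ × ℝ)) \ (Ioi (0:ℝ) ×ˢ Ioc (-π) π) = ∅ := by
      apply diff_eq_empty.mpr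
      exact prod_mono le_rfl Ioo_subset_Ioc_self
    rw [this, measure_empty]

lemma prod_Ioo_ae_eq_Ioc (α β : ℝ) :
    (Ioi (0:ℝ) ×ˢ Ioo α β : Set (ℝ × ℝ)) =ᵐ[volume] (Ioi (0:ℝ) ×ˢ Ioc α β : Set (ℝ × ℝ)) := by
  rw [MeasureTheory.ae_eq_set]
  constructor
  · have : (Ioi (0:ℝ) ×ˢ Ioo α β : Set (ℝ × ℝ)) \ (Ioi (0:ℝ) ×ˢ Ioc α β) = ∅ := by
      apply diff_eq_empty.mpr
      exact prod_mono le_rfl Ioo_subset_Ioc_self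
    rw [this, measure_empty]
  · apply measure_mono_null (t := (univ ×ˢ {β} : Set (ℝ × ℝ)))
    · rintro ⟨r, θ⟩ ⟨h1, h2⟩
      simp only [mem_prod, mem_Ioi, mem_Ioc, mem_Ioo] at h1 h2
      constructor
      · trivial
      · simp only [mem_singleton_iff]
        by_contra hne
        exact h2 ⟨h1.1, ⟨h1.2.1, lt_of_le_of_ne h1.2.2 hne⟩⟩
    · rw [Measure.volume_eq_prod, Measure.prod_prod, Real.volume_singleton, mul_zero]

lemma qeq (p : ℝ × ℝ) :
    Complex.polarCoord.symm p = (p.1 : ℂ) * Complex.exp (p.2 * Complex.I) := by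
  rw [Complex.polarCoord_symm_apply, Complex.exp_mul_I]
  simp [Complex.ofReal_cos, Complex.ofReal_sin]

lemma base_strip (a : ℝ) (ha : 0 < a) (P w : ℂ) (hw : ‖w‖ = 1) :
    IntegrableOn (fun p : ℝ × ℝ => p.1 • gP a P w (Complex.polarCoord.symm p))
      (Ioi (0:ℝ) ×ˢ Ioc (-π) π) ∧
    ∫ p in (Ioi (0:ℝ) ×ˢ Ioc (-π) π),
      p.1 • gP a P w (Complex.polarCoord.symm p) = 0 := by
  constructor
  · exact (integrableOn_polar (gP_integrable a ha P w hw)).congr_set_ae prod_Ioc_ae_eq_target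
  · rw [setIntegral_congr_set prod_Ioc_ae_eq_target,
      Complex.integral_comp_polarCoord_symm (gP a P w), rot_zero a P w hw]

lemma polarFn_continuous (a : ℝ) (ha : 0 < a) (P w : ℂ) :
    Continuous (fun p : ℝ × ℝ => p.1 • gP a P w (Complex.polarCoord.symm p)) := by
  have heq : (fun p : ℝ × ℝ => p.1 • gP a P w (Complex.polarCoord.symm p))
      = fun p : ℝ × ℝ => p.1 • gP a P w ((p.1 : ℂ) * Complex.exp (p.2 * Complex.I)) := by
    funext p; rw [qeq]
  rw [heq]
  apply Continuous.smul continuous_fst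
  apply (gP_continuous a ha P w).comp
  fun_prop

lemma any_strip (a : ℝ) (ha : 0 < a) (P w : ℂ) (hw : ‖w‖ = 1) (c : ℝ) :
    IntegrableOn (fun p : ℝ × ℝ => p.1 • gP a P w (Complex.polarCoord.symm p))
      (Ioi (0:ℝ) ×ˢ Ioc c (c + 2*π)) ∧
    ∫ p in (Ioi (0:ℝ) ×ˢ Ioc c (c + 2*π)),
      p.1 • gP a P w (Complex.polarCoord.symm p) = 0 := by
  set f : ℝ × ℝ → ℂ := fun p => p.1 • gP a P w (Complex.polarCoord.symm p) with hfdef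
  set v : ℝ × ℝ := ((0:ℝ), c + π) with hvdef
  set w' : ℂ := w * Complex.exp ((c + π : ℝ) * Complex.I) with hw'def
  set f' : ℝ × ℝ → ℂ := fun p => p.1 • gP a P w' (Complex.polarCoord.symm p) with hf'def
  have hw' : ‖w'‖ = 1 := by
    rw [hw'def, norm_mul, hw, one_mul, Complex.norm_exp_ofReal_mul_I]
  set A : Set (ℝ × ℝ) := Ioi (0:ℝ) ×ˢ Ioc c (c + 2*π) with hAdef
  set B : Set (ℝ × ℝ) := Ioi (0:ℝ) ×ˢ Ioc (-π) π with hBdef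
  have hAmeas : MeasurableSet A := measurableSet_Ioi.prod measurableSet_Ioc
  have hBmeas : MeasurableSet B := measurableSet_Ioi.prod measurableSet_Ioc
  have hfun : ∀ x : ℝ × ℝ, (A.indicator f) (x + v) = (B.indicator f') x := by
    intro x
    have hmem : x + v ∈ A ↔ x ∈ B := by
      simp only [hAdef, hBdef, hvdef, mem_prod, mem_Ioi, mem_Ioc, Prod.fst_add, Prod.snd_add]
      constructor
      · rintro ⟨h1, h2, h3⟩
        exact ⟨by linarith, by linarith, by linarith⟩
      · rintro ⟨h1, h2, h3⟩
        exact ⟨by linarith, by linarith, by linarith⟩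
    have hval : f (x + v) = f' x := by
      have h1 : (x + v).1 = x.1 := by simp [hvdef]
      have h2 : Complex.polarCoord.symm (x + v)
          = Complex.exp ((c + π : ℝ) * Complex.I) * Complex.polarCoord.symm x := by
        rw [qeq, qeq]
        have h3 : (x + v).2 = x.2 + (c + π) := by simp [hvdef]
        rw [h1, h3]
        push_cast
        rw [add_mul, Complex.exp_add]
        ring
      have h4 : w * (Complex.exp ((c + π : ℝ) * Complex.I) * Complex.polarCoord.symm x)
          = w' * Complex.polarCoord.symm x := by rw [hw'def]; ring
      rw [hfdef, hf'def]
      simp only [h1, h2, gP, h4]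
    simp only [Set.indicator_apply]
    exact if_congr hmem hval rfl
  have hbase := base_strip a ha P w' hw'
  have hmeasf : AEStronglyMeasurable (A.indicator f) volume :=
    ((polarFn_continuous a ha P w).aestronglyMeasurable).indicator hAmeas
  constructor
  · rw [show (IntegrableOn f A volume) = Integrable (A.indicator f) volume from
      (propext (integrable_indicator_iff hAmeas)).symm]
    have hI : Integrable ((A.indicator f) ∘ (· + v)) := by
      have hB : Integrable (B.indicator f') := (integrable_indicator_iff hBmeas).mpr hbase.1
      have heq : ((A.indicator f) ∘ (· + v)) = B.indicator f' := funext hfun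
      rw [heq]; exact hB
    exact ((measurePreserving_add_right volume v).integrable_comp hmeasf).mp hI
  · rw [← integral_indicator hAmeas,
      ← integral_add_right_eq_self (fun x => (A.indicator f) x) v]
    simp only [hfun]
    rw [integral_indicator hBmeas]
    exact hbase.2

lemma big_strip (a : ℝ) (ha : 0 < a) (P w : ℂ) (hw : ‖w‖ = 1) (n : ℕ) : ∀ c : ℝ,
    IntegrableOn (fun p : ℝ × ℝ => p.1 • gP a P w (Complex.polarCoord.symm p))
      (Ioi (0:ℝ) ×ˢ Ioc c (c + 2*π*n)) ∧
    ∫ p in (Ioi (0:ℝ) ×ˢ Ioc c (c + 2*π*n)),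
      p.1 • gP a P w (Complex.polarCoord.symm p) = 0 := by
  induction n with
  | zero =>
      intro c
      have hempty : (Ioi (0:ℝ) ×ˢ Ioc c (c + 2*π*(0:ℕ))) = (∅ : Set (ℝ × ℝ)) := by
        simp
      rw [hempty]
      exact ⟨integrableOn_empty, by simp⟩
  | succ n ih =>
      intro c
      have hπ : (0:ℝ) < π := Real.pi_pos
      have h0 : (0:ℝ) ≤ 2*π*n := by positivity
      have h1 : c ≤ c + 2*π*n := by linarith
      have h2 : c + 2*π*n ≤ c + 2*π*(n+1:ℕ) := by push_cast; nlinarith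
      have hsplit : Ioc c (c + 2*π*(n+1:ℕ))
          = Ioc c (c + 2*π*n) ∪ Ioc (c + 2*π*n) (c + 2*π*(n+1:ℕ)) :=
        (Set.Ioc_union_Ioc_eq_Ioc h1 h2).symm
      have hend : c + 2*π*(n+1:ℕ) = (c + 2*π*n) + 2*π := by push_cast; ring
      obtain ⟨hi1, hz1⟩ := ih c
      obtain ⟨hi2, hz2⟩ := any_strip a ha P w hw (c + 2*π*n)
      rw [hend] at hsplit ⊢
      have hdisj : Disjoint (Ioi (0:ℝ) ×ˢ Ioc c (c + 2*π*n))
          (Ioi (0:ℝ) ×ˢ Ioc (c + 2*π*n) ((c + 2*π*n) + 2*π)) := by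
        rw [Set.disjoint_left]
        rintro ⟨r, θ⟩ hx hy
        simp only [mem_prod, mem_Ioi, mem_Ioc] at hx hy
        linarith [hx.2.2, hy.2.1]
      have hmeas2 : MeasurableSet (Ioi (0:ℝ) ×ˢ Ioc (c + 2*π*n) ((c + 2*π*n) + 2*π)) :=
        measurableSet_Ioi.prod measurableSet_Ioc
      constructor
      · rw [hsplit, Set.prod_union]
        exact hi1.union hi2
      · rw [hsplit, Set.prod_union, setIntegral_union hdisj hmeas2 hi1 hi2, hz1, hz2, add_zero]

noncomputable def Phi (N : ℕ) : ℝ × ℝ → ℝ × ℝ := fun p => (p.1 ^ (N + 1), ((N : ℝ) + 1) * p.2)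

noncomputable def Mder (N : ℕ) : ℝ × ℝ → (ℝ × ℝ →L[ℝ] ℝ × ℝ) := fun p =>
  LinearMap.toContinuousLinearMap (Matrix.toLin (Module.Basis.finTwoProd ℝ) (Module.Basis.finTwoProd ℝ)
    !![((N : ℝ) + 1) * p.1 ^ N, 0; 0, (N : ℝ) + 1])

lemma hasFDerivAt_Phi (N : ℕ) (p : ℝ × ℝ) : HasFDerivAt (Phi N) (Mder N p) p := by
  have h1 : HasFDerivAt (fun p : ℝ × ℝ => p.1 ^ (N + 1))
      ((((N : ℝ) + 1) * p.1 ^ N) • ContinuousLinearMap.fst ℝ ℝ ℝ) p := by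
    have := (hasDerivAt_pow (N + 1) p.1).comp_hasFDerivAt p
      (hasFDerivAt_fst : HasFDerivAt Prod.fst (ContinuousLinearMap.fst ℝ ℝ ℝ) p)
    simpa [Function.comp_def] using this
  have h2 : HasFDerivAt (fun p : ℝ × ℝ => ((N : ℝ) + 1) * p.2)
      (((N : ℝ) + 1) • ContinuousLinearMap.snd ℝ ℝ ℝ) p := by
    simpa using (hasFDerivAt_snd (p := p)).const_mul ((N : ℝ) + 1)
  have := h1.prodMk h2
  rw [Mder, Matrix.toLin_finTwoProd_toContinuousLinearMap]
  unfold Phi; simpa [zero_smul] using this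

lemma det_Mder (N : ℕ) (p : ℝ × ℝ) : (Mder N p).det = ((N : ℝ) + 1) ^ 2 * p.1 ^ N := by
  simp only [Mder, LinearMap.det_toContinuousLinearMap, LinearMap.det_toLin,
    Matrix.det_fin_two_of]
  ring

lemma injOn_Phi (N : ℕ) : InjOn (Phi N) polarCoord.target := by
  rintro ⟨r, θ⟩ h ⟨r', θ'⟩ h' heq
  have htar : polarCoord.target = Ioi (0:ℝ) ×ˢ Ioo (-π) π := rfl
  rw [htar] at h h'
  simp only [mem_prod, mem_Ioi, mem_Ioo] at h h'
  simp only [Phi, Prod.mk.injEq] at heq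
  have hN : ((N : ℝ) + 1) ≠ 0 := by positivity
  have hr : r = r' := by
    have hmono : StrictMonoOn (fun x : ℝ => x ^ (N+1)) (Ici 0) :=
      pow_left_strictMonoOn₀ (by omega)
    exact hmono.injOn h.1.le h'.1.le heq.1
  exact Prod.ext hr (mul_left_cancel₀ hN heq.2)

lemma image_Phi (N : ℕ) : Phi N '' polarCoord.target
    = Ioi (0:ℝ) ×ˢ Ioo (((N : ℝ) + 1) * (-π)) (((N : ℝ) + 1) * π) := by
  have htar : polarCoord.target = Ioi (0:ℝ) ×ˢ Ioo (-π) π := rfl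
  have himg1 : (fun x : ℝ => x ^ (N+1)) '' Ioi 0 = Ioi 0 := by
    ext x
    simp only [mem_image, mem_Ioi]
    constructor
    · rintro ⟨y, hy, rfl⟩
      exact pow_pos hy _
    · intro hx
      refine ⟨x ^ (((N : ℝ) + 1)⁻¹), Real.rpow_pos_of_pos hx _, ?_⟩
      rw [← Real.rpow_natCast (x ^ (((N : ℝ) + 1)⁻¹)) (N + 1), ← Real.rpow_mul hx.le]
      push_cast
      rw [inv_mul_cancel₀ (by positivity), Real.rpow_one]
  have himg2 : (fun y : ℝ => ((N : ℝ) + 1) * y) '' Ioo (-π) π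
      = Ioo (((N : ℝ) + 1) * (-π)) (((N : ℝ) + 1) * π) :=
    Set.image_mul_left_Ioo (by positivity) _ _
  rw [htar, show Phi N = fun p : ℝ × ℝ => ((p.1 ^ (N+1) : ℝ), ((N : ℝ) + 1) * p.2) from rfl]
  calc (fun p : ℝ × ℝ => ((p.1 ^ (N+1) : ℝ), ((N : ℝ) + 1) * p.2)) '' (Ioi 0 ×ˢ Ioo (-π) π)
      = ((fun x : ℝ => x ^ (N+1)) '' Ioi 0) ×ˢ ((fun y : ℝ => ((N : ℝ) + 1) * y) '' Ioo (-π) π) :=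
        (Set.prod_image_image_eq (m₁ := fun x : ℝ => x ^ (N+1))
          (m₂ := fun y : ℝ => ((N:ℝ)+1) * y) (s := Ioi 0) (t := Ioo (-π) π)).symm
    _ = _ := by rw [himg1, himg2]

lemma main_zero (N : ℕ) (a : ℝ) (ha : 0 < a) (P : ℂ) :
    ∫ z : ℂ,
      (z ^ (N + 1) - P) * ((‖z‖ ^ (2 * N) / (1 + a * ‖z ^ (N + 1) - P‖ ^ 2) ^ 3 : ℝ) : ℂ)
      = 0 := by
  set F : ℂ → ℂ := fun z =>
    (z ^ (N + 1) - P) * ((‖z‖ ^ (2 * N) / (1 + a * ‖z ^ (N + 1) - P‖ ^ 2) ^ 3 : ℝ) : ℂ)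
    with hFdef
  set G : ℝ × ℝ → ℂ := fun u => u.1 • gP a P 1 (Complex.polarCoord.symm u) with hGdef
  have hQpow : ∀ p : ℝ × ℝ,
      (Complex.polarCoord.symm p) ^ (N + 1) = Complex.polarCoord.symm (Phi N p) := by
    intro p
    rw [qeq, qeq]
    show ((p.1 : ℂ) * Complex.exp (p.2 * Complex.I)) ^ (N + 1)
      = ((p.1 ^ (N+1) : ℝ) : ℂ) * Complex.exp ((((N : ℝ) + 1) * p.2 : ℝ) * Complex.I)
    rw [mul_pow, ← Complex.exp_nat_mul]
    push_cast
    ring_nf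
  have hpoint : ∀ p ∈ polarCoord.target, p.1 • F (Complex.polarCoord.symm p)
      = ((((N : ℝ) + 1) ^ 2)⁻¹) • (|(Mder N p).det| • G (Phi N p)) := by
    rintro ⟨r, θ⟩ hp
    have htar : polarCoord.target = Ioi (0:ℝ) ×ˢ Ioo (-π) π := rfl
    rw [htar] at hp
    simp only [mem_prod, mem_Ioi, mem_Ioo] at hp
    have hr : (0:ℝ) < r := hp.1
    set p : ℝ × ℝ := (r, θ) with hpdef
    have hQnorm : ‖Complex.polarCoord.symm p‖ = r := by
      rw [Complex.norm_polarCoord_symm, abs_of_pos hr]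
    have hdet : |(Mder N p).det| = ((N : ℝ) + 1) ^ 2 * r ^ N := by
      rw [det_Mder]
      apply abs_of_pos
      have : (0:ℝ) < r ^ N := pow_pos hr N
      positivity
    have hPhi1 : (Phi N p).1 = r ^ (N + 1) := rfl
    set w : ℂ := Complex.polarCoord.symm (Phi N p) with hwdef
    have hFval : F (Complex.polarCoord.symm p)
        = (w - P) * ((r ^ (2 * N) / (1 + a * ‖w - P‖ ^ 2) ^ 3 : ℝ) : ℂ) := by
      rw [hFdef]
      simp only [hQpow p, hQnorm, hwdef]
    have hGval : G (Phi N p) = (r ^ (N+1) : ℝ) • ((w - P)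
        * (((1:ℝ) / (1 + a * ‖w - P‖ ^ 2) ^ 3 : ℝ) : ℂ)) := by
      rw [hGdef]
      simp only [hPhi1, hwdef, gP, one_mul]
    rw [hFval, hGval, hdet]
    have hp1 : p.1 = r := rfl
    rw [hp1]
    set Dr : ℝ := (1 + a * ‖w - P‖ ^ 2) ^ 3 with hDrdef
    have hsplit : ((r ^ (2*N) / Dr : ℝ) : ℂ)
        = ((r ^ (2*N) : ℝ) : ℂ) * (((1:ℝ)/Dr : ℝ) : ℂ) := by push_cast; ring
    rw [hsplit,
      show (w - P) * (((r ^ (2*N) : ℝ) : ℂ) * (((1:ℝ)/Dr : ℝ) : ℂ))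
          = (r ^ (2*N) : ℝ) • ((w - P) * (((1:ℝ)/Dr : ℝ) : ℂ)) from by
        rw [Complex.real_smul]; ring,
      smul_smul, smul_smul, smul_smul]
    congr 1
    have hN : ((N:ℝ) + 1) ^ 2 ≠ 0 := by positivity
    field_simp
    ring
  rw [← Complex.integral_comp_polarCoord_symm F,
    setIntegral_congr_fun polarCoord.open_target.measurableSet hpoint,
    integral_smul,
    ← integral_image_eq_integral_abs_det_fderiv_smul volume
      polarCoord.open_target.measurableSet
      (fun p _ => (hasFDerivAt_Phi N p).hasFDerivWithinAt) (injOn_Phi N) G,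
    image_Phi, setIntegral_congr_set (prod_Ioo_ae_eq_Ioc _ _)]
  have hend : ((N : ℝ) + 1) * π = ((N : ℝ) + 1) * (-π) + 2*π*((N+1 : ℕ) : ℝ) := by
    push_cast; ring
  rw [hend, (big_strip a ha P 1 (norm_one) (N+1) (((N : ℝ) + 1) * (-π))).2, smul_zero]

end MassDerivAux

/-- differentiating the total mass of the global Liouville bubble in the
location parameter gives zero:
`∫_ℂ (z^{N+1} - P)|z|^{2N}/(1 + a|z^{N+1}-P|²)³ dz = 0`, and likewise for the conjugate. -/
theorem mass_derivative_location_zero (N : ℕ) (a : ℝ) (ha : 0 < a) (P : ℂ) :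
    Integrable (fun z : ℂ =>
      (z ^ (N + 1) - P) * ((‖z‖ ^ (2 * N) / (1 + a * ‖z ^ (N + 1) - P‖ ^ 2) ^ 3 : ℝ) : ℂ)) ∧
    ∫ z : ℂ,
      (z ^ (N + 1) - P) * ((‖z‖ ^ (2 * N) / (1 + a * ‖z ^ (N + 1) - P‖ ^ 2) ^ 3 : ℝ) : ℂ)
      = 0 ∧
    ∫ z : ℂ, (starRingEnd ℂ)
      ((z ^ (N + 1) - P) * ((‖z‖ ^ (2 * N) / (1 + a * ‖z ^ (N + 1) - P‖ ^ 2) ^ 3 : ℝ) : ℂ))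
      = 0 := by
  refine ⟨MassDerivAux.F_integrable N a ha P, MassDerivAux.main_zero N a ha P, ?_⟩
  rw [integral_conj, MassDerivAux.main_zero N a ha P, map_zero]
end

section
/- Let N ≥ 0 be an integer, R > 2, a ≥ 0, b ≥ 0, and let w be continuous on the closed annulus Ā = {z ∈ ℝ² : 2 ≤ |z| ≤ R} and C² in its interior, with |Δw(z)| ≤ a|z|^{-4-2N} for 2 < |z| < R and |w(z)| ≤ b for |z| = 2 and for |z| = R. Then |w(z)| ≤ b + a/((2+2N)² · 2^{2+2N}) for all z ∈ Ā. -/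
open Metric Real

/-- The Laplacian of a real-valued function on `ℂ ≅ ℝ²`. -/
noncomputable def lap (f : ℂ → ℝ) (z : ℂ) : ℝ :=
  iteratedFDeriv ℝ 2 f z ![(1:ℂ), 1] + iteratedFDeriv ℝ 2 f z ![Complex.I, Complex.I]


noncomputable def nsqD (z : ℂ) : ℂ →L[ℝ] ℝ :=
  (2*z.re) • Complex.reCLM + (2*z.im) • Complex.imCLM

lemma nsqD_apply (z v : ℂ) : nsqD z v = 2*z.re*v.re + 2*z.im*v.im := by
  simp [nsqD]

lemma hasFDerivAt_nsq (z : ℂ) : HasFDerivAt Complex.normSq (nsqD z) z := by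
  have h : HasFDerivAt (fun y : ℂ => y.re * y.re + y.im * y.im)
      ((z.re • Complex.reCLM + z.re • Complex.reCLM) +
        (z.im • Complex.imCLM + z.im • Complex.imCLM)) z := by
    exact (Complex.reCLM.hasFDerivAt.mul Complex.reCLM.hasFDerivAt).add
      (Complex.imCLM.hasFDerivAt.mul Complex.imCLM.hasFDerivAt)
  have hfun : Complex.normSq = fun y : ℂ => y.re * y.re + y.im * y.im := by
    funext y; exact Complex.normSq_apply y
  rw [hfun]
  convert h using 1
  ext v
  simp [nsqD]
  ring

lemma hasDerivAt_line (z v : ℂ) (t : ℝ) : HasDerivAt (fun s : ℝ => z + s • v) v t := by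
  simpa using ((hasDerivAt_id t).smul_const v).const_add z

lemma bridge {U : Set ℂ} (hU : IsOpen U) {f : ℂ → ℝ} (hf : ContDiffOn ℝ 2 f U)
    {z : ℂ} (hz : z ∈ U) (v : ℂ) :
    ∃ δ > 0, (∀ t : ℝ, |t| < δ → z + t • v ∈ U) ∧
      (∀ t : ℝ, |t| < δ → HasDerivAt (fun s : ℝ => f (z + s • v)) (fderiv ℝ f (z + t • v) v) t) ∧
      HasDerivAt (fun t : ℝ => fderiv ℝ f (z + t • v) v) (iteratedFDeriv ℝ 2 f z ![v, v]) 0 := by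
  have hline : Continuous fun t : ℝ => z + t • v := by continuity
  obtain ⟨δ, hδ, hsub⟩ := Metric.isOpen_iff.mp (hU.preimage hline) 0 (by simpa using hz)
  have hmem : ∀ t : ℝ, |t| < δ → z + t • v ∈ U := by
    intro t ht
    exact hsub (by simpa [Real.dist_eq] using ht)
  refine ⟨δ, hδ, hmem, ?_, ?_⟩
  · intro t ht
    have hdiff : DifferentiableAt ℝ f (z + t • v) :=
      (hf.contDiffAt (hU.mem_nhds (hmem t ht))).differentiableAt (by norm_num)
    exact hdiff.hasFDerivAt.comp_hasDerivAt t (hasDerivAt_line z v t)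
  · have hC : ContDiffAt ℝ 1 (fderiv ℝ f) z :=
      (hf.contDiffAt (hU.mem_nhds hz)).fderiv_right (le_refl _)
    have hd : HasFDerivAt (fderiv ℝ f) (fderiv ℝ (fderiv ℝ f) z) z :=
      (hC.differentiableAt one_ne_zero).hasFDerivAt
    have h1 : HasDerivAt (fun t : ℝ => fderiv ℝ f (z + t • v)) (fderiv ℝ (fderiv ℝ f) z v) 0 := by
      exact hd.comp_hasDerivAt_of_eq 0 (hasDerivAt_line z v 0) (by simp)
    have h2 := (ContinuousLinearMap.apply ℝ ℝ v).hasFDerivAt.comp_hasDerivAt 0 h1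
    rw [iteratedFDeriv_two_apply]
    exact h2

lemma secondDeriv_nonpos {g g' : ℝ → ℝ} {δ L : ℝ} (hδ : 0 < δ)
    (hg : ∀ t : ℝ, |t| < δ → HasDerivAt g (g' t) t)
    (hmax : IsLocalMax g 0) (hL : HasDerivAt g' L 0) : L ≤ 0 := by
  by_contra hL'
  push_neg at hL'
  have h0 : g' 0 = 0 :=
    ((hg 0 (by simpa using hδ)).deriv).symm.trans hmax.deriv_eq_zero
  have hslope : Filter.Tendsto (slope g' 0) (nhdsWithin 0 {(0:ℝ)}ᶜ) (nhds L) :=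
    hasDerivAt_iff_tendsto_slope.mp hL
  have hev : ∀ᶠ t in nhdsWithin 0 {(0:ℝ)}ᶜ, 0 < slope g' 0 t :=
    hslope.eventually_const_lt hL'
  have hev' : ∀ᶠ t in nhdsWithin (0:ℝ) (Set.Ioi 0), 0 < slope g' 0 t :=
    hev.filter_mono (nhdsWithin_mono 0 (fun t ht => ne_of_gt ht))
  rw [eventually_nhdsWithin_iff] at hev'
  obtain ⟨δ₂, hδ₂, hpos⟩ := Metric.eventually_nhds_iff.mp hev'
  obtain ⟨δ₃, hδ₃, hloc⟩ := Metric.eventually_nhds_iff.mp hmax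
  set t0 : ℝ := min δ (min δ₂ δ₃) / 2 with ht0
  have ht0pos : 0 < t0 := by positivity
  have ht0δ : t0 < δ := by
    have := min_le_left δ (min δ₂ δ₃); linarith [lt_min hδ₂ hδ₃]
  have ht0δ₂ : t0 < δ₂ := by
    have h1 := min_le_right δ (min δ₂ δ₃)
    have h2 := min_le_left δ₂ δ₃
    linarith
  have ht0δ₃ : t0 < δ₃ := by
    have h1 := min_le_right δ (min δ₂ δ₃)
    have h2 := min_le_right δ₂ δ₃
    linarith
  have hg'pos : ∀ s ∈ Set.Ioo (0:ℝ) t0, 0 < g' s := by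
    intro s hs
    have h1 : 0 < slope g' 0 s := by
      refine hpos (y := s) ?_ hs.1
      rw [Real.dist_eq, sub_zero, abs_of_pos hs.1]
      linarith [hs.2]
    rw [slope_def_field, h0, sub_zero, sub_zero] at h1
    have := hs.1
    exact (div_pos_iff.mp h1).elim (fun h => h.1) (fun h => absurd h.2 (by linarith))
  have hcont : ContinuousOn g (Set.Icc 0 t0) := by
    intro x hx
    have hxδ : |x| < δ := by
      rw [abs_of_nonneg hx.1]; linarith [hx.2]
    exact (hg x hxδ).continuousAt.continuousWithinAt
  have hderiv : ∀ x ∈ Set.Ioo (0:ℝ) t0, HasDerivAt g (g' x) x := by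
    intro x hx
    have hxδ : |x| < δ := by
      rw [abs_of_pos hx.1]; linarith [hx.2]
    exact hg x hxδ
  obtain ⟨cc, hcc, hceq⟩ := exists_hasDerivAt_eq_slope g g' ht0pos hcont hderiv
  have hle : g t0 ≤ g 0 := by
    refine hloc (y := t0) ?_
    rw [Real.dist_eq, sub_zero, abs_of_pos ht0pos]
    exact ht0δ₃
  have : g' cc ≤ 0 := by
    rw [hceq]
    apply div_nonpos_of_nonpos_of_nonneg <;> [linarith; linarith]
  linarith [hg'pos cc hcc]

noncomputable def psi (c ε K : ℝ) (m : ℕ) (y : ℂ) : ℝ :=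
  K - c * (Complex.normSq y ^ (-(m:ℤ))) - ε * Complex.normSq y

noncomputable def psi' (c ε : ℝ) (m : ℕ) (y : ℂ) : ℂ →L[ℝ] ℝ :=
  (c * m * (Complex.normSq y ^ (-(m:ℤ)-1)) - ε) • nsqD y

lemma psi'_apply (c ε : ℝ) (m : ℕ) (y v : ℂ) :
    psi' c ε m y v = (c * m * (Complex.normSq y ^ (-(m:ℤ)-1)) - ε) * nsqD y v := by
  simp [psi']

lemma normSq_ne_zero {y : ℂ} (hy : y ≠ 0) : Complex.normSq y ≠ 0 := by
  simpa [Complex.normSq_eq_zero] using hy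

lemma hasFDerivAt_psi (c ε K : ℝ) (m : ℕ) {y : ℂ} (hy : y ≠ 0) :
    HasFDerivAt (psi c ε K m) (psi' c ε m y) y := by
  have hs : Complex.normSq y ≠ 0 := normSq_ne_zero hy
  have h1 := hasFDerivAt_nsq y
  have h2 : HasFDerivAt (fun y : ℂ => Complex.normSq y ^ (-(m:ℤ)))
      ((((-(m:ℤ) : ℤ) : ℝ) * Complex.normSq y ^ (-(m:ℤ)-1)) • nsqD y) y :=
    (hasDerivAt_zpow (-(m:ℤ)) _ (Or.inl hs)).comp_hasFDerivAt y h1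
  have h3 := ((hasFDerivAt_const K y).sub (h2.const_mul c)).sub (h1.const_mul ε)
  refine HasFDerivAt.congr_fderiv h3 ?_
  ext u
  simp [psi', nsqD]
  ring

lemma psi_line_deriv (c ε : ℝ) (m : ℕ) {z : ℂ} (v : ℂ) (hz : z ≠ 0) :
    HasDerivAt (fun t : ℝ => psi' c ε m (z + t • v) v)
      ((c * m * (((-(m:ℤ)-1 : ℤ) : ℝ) * Complex.normSq z ^ (-(m:ℤ)-1-1) * nsqD z v)) * nsqD z v
        + (c * m * (Complex.normSq z ^ (-(m:ℤ)-1)) - ε) * (2*v.re^2 + 2*v.im^2)) 0 := by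
  have hs : Complex.normSq z ≠ 0 := normSq_ne_zero hz
  have hA : HasDerivAt (fun t : ℝ => Complex.normSq (z + t • v)) (nsqD z v) 0 :=
    (hasFDerivAt_nsq z).comp_hasDerivAt_of_eq 0 (hasDerivAt_line z v 0) (by simp)
  have hB : HasDerivAt (fun t : ℝ => Complex.normSq (z + t • v) ^ (-(m:ℤ)-1))
      (((-(m:ℤ)-1 : ℤ) : ℝ) * Complex.normSq z ^ (-(m:ℤ)-1-1) * nsqD z v) 0 := by
    have h := (hasDerivAt_zpow (-(m:ℤ)-1) (Complex.normSq z) (Or.inl hs)).comp_of_eq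
      (x := (0:ℝ)) hA (by simp)
    exact h
  have hC : HasDerivAt (fun t : ℝ => nsqD (z + t • v) v) (2*v.re^2 + 2*v.im^2) 0 := by
    have haff : HasDerivAt (fun t : ℝ => (2*z.re*v.re + 2*z.im*v.im) + (2*v.re^2 + 2*v.im^2) * t)
        (2*v.re^2 + 2*v.im^2) 0 := by
      simpa using ((hasDerivAt_id (0:ℝ)).const_mul (2*v.re^2 + 2*v.im^2)).const_add
        (2*z.re*v.re + 2*z.im*v.im)
    convert haff using 1
    funext t
    simp [nsqD_apply, Complex.add_re, Complex.add_im, Complex.smul_re, Complex.smul_im]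
    ring
  have hσ : HasDerivAt (fun t : ℝ => c * m * (Complex.normSq (z + t • v) ^ (-(m:ℤ)-1)) - ε)
      (c * m * (((-(m:ℤ)-1 : ℤ) : ℝ) * Complex.normSq z ^ (-(m:ℤ)-1-1) * nsqD z v)) 0 := by
    simpa [mul_assoc] using (hB.const_mul (c * m)).sub_const ε
  have h := hσ.mul hC
  have h0 : (fun t : ℝ => psi' c ε m (z + t • v) v)
      = fun t : ℝ => (c * m * (Complex.normSq (z + t • v) ^ (-(m:ℤ)-1)) - ε) * nsqD (z + t • v) v := by
    funext t; exact psi'_apply c ε m (z + t • v) v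
  rw [h0]
  refine HasDerivAt.congr_deriv h ?_
  simp

lemma normSq_eq_norm_sq (y : ℂ) : Complex.normSq y = ‖y‖ ^ 2 := by
  rw [Complex.normSq_eq_norm_sq]

lemma sum_formula (a c ε S P Q T U n : ℝ) (hS : S = P^2+Q^2) (hTU : U * S = T)
    (h4c : c * (4*(n+1)^2) = a) :
    (c*(n+1)*(-(n+2)*U*(2*P)))*(2*P) + (c*(n+1)*T - ε)*(2*(1:ℝ)^2+2*(0:ℝ)^2)
      + ((c*(n+1)*(-(n+2)*U*(2*Q)))*(2*Q) + (c*(n+1)*T - ε)*(2*(0:ℝ)^2+2*(1:ℝ)^2))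
      = -(a*T) - 4*ε := by
  subst hS
  subst hTU
  subst h4c
  ring

lemma one_sided (N : ℕ) (R a b : ℝ) (hR : 2 < R) (ha : 0 ≤ a) (hb : 0 ≤ b)
    (w : ℂ → ℝ)
    (hwc : ContinuousOn w (closedBall 0 R \ ball 0 2))
    (hwreg : ContDiffOn ℝ 2 w (ball 0 R \ closedBall 0 2))
    (hlap : ∀ z : ℂ, 2 < ‖z‖ → ‖z‖ < R → -(a / ‖z‖ ^ (4 + 2 * N)) ≤ lap w z)
    (hbd : ∀ z : ℂ, ‖z‖ = 2 ∨ ‖z‖ = R → w z ≤ b) :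
    ∀ z : ℂ, 2 ≤ ‖z‖ → ‖z‖ ≤ R →
      w z ≤ b + a / ((2 + 2 * (N:ℝ)) ^ 2 * 2 ^ (2 + 2 * N)) := by
  intro z hz2 hzR
  set m : ℕ := N + 1 with hm
  set c : ℝ := a / (2 + 2 * (N:ℝ)) ^ 2 with hc
  have hNpos : (0:ℝ) < 2 + 2 * (N:ℝ) := by positivity
  have hc0 : 0 ≤ c := by positivity
  have key : ∀ ε : ℝ, 0 < ε → w z ≤ b + c / 2 ^ (2 + 2 * N) + ε * R ^ 2 := by
    intro ε hε
    set K : ℝ := b + ε * R ^ 2 + c / 2 ^ (2 + 2 * N) with hK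
    set A : Set ℂ := closedBall 0 R \ ball 0 2 with hA
    set V : Set ℂ := ball 0 R \ closedBall 0 2 with hV
    have hAmem : ∀ y : ℂ, y ∈ A ↔ ‖y‖ ≤ R ∧ 2 ≤ ‖y‖ := by
      intro y
      simp [hA, Set.mem_diff, mem_closedBall_zero_iff, mem_ball_zero_iff, not_lt]
    have hVmem : ∀ y : ℂ, y ∈ V ↔ ‖y‖ < R ∧ 2 < ‖y‖ := by
      intro y
      simp [hV, Set.mem_diff, mem_closedBall_zero_iff, mem_ball_zero_iff, not_le]
    have hVne : ∀ y ∈ V, y ≠ 0 := by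
      intro y hy h0
      have := ((hVmem y).mp hy).2
      rw [h0] at this
      simp at this
      linarith
    have hψ_lb : ∀ y : ℂ, ‖y‖ ≤ R → 2 ≤ ‖y‖ → b ≤ psi c ε K m y := by
      intro y hyR hy2
      have h4 : (4:ℝ) ≤ Complex.normSq y := by
        rw [normSq_eq_norm_sq]; nlinarith
      have hpow2 : (2:ℝ) ^ (2 + 2 * N) = 4 ^ m := by
        rw [show (4:ℝ) = 2 ^ 2 by norm_num, ← pow_mul]
        congr 1
        omega
      have hmono : (2:ℝ) ^ (2 + 2 * N) ≤ Complex.normSq y ^ m := by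
        rw [hpow2]
        exact pow_le_pow_left₀ (by norm_num) h4 m
      have h2pos : (0:ℝ) < 2 ^ (2 + 2 * N) := by positivity
      have hinv : (Complex.normSq y ^ m)⁻¹ ≤ ((2:ℝ) ^ (2 + 2 * N))⁻¹ :=
        inv_anti₀ h2pos hmono
      have hzp : Complex.normSq y ^ (-(m:ℤ)) = (Complex.normSq y ^ m)⁻¹ := by
        rw [zpow_neg, zpow_natCast]
      have h1 : c * Complex.normSq y ^ (-(m:ℤ)) ≤ c / 2 ^ (2 + 2 * N) := by
        rw [hzp, div_eq_mul_inv]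
        exact mul_le_mul_of_nonneg_left hinv hc0
      have h2 : ε * Complex.normSq y ≤ ε * R ^ 2 := by
        apply mul_le_mul_of_nonneg_left _ hε.le
        rw [normSq_eq_norm_sq]
        have : (0:ℝ) ≤ ‖y‖ := norm_nonneg y
        nlinarith
      simp only [psi, hK]
      linarith
    have hψ_ub : ∀ y : ℂ, psi c ε K m y ≤ K := by
      intro y
      have h1 : 0 ≤ c * Complex.normSq y ^ (-(m:ℤ)) := by
        apply mul_nonneg hc0
        exact zpow_nonneg (Complex.normSq_nonneg y) _
      have h2 : 0 ≤ ε * Complex.normSq y := mul_nonneg hε.le (Complex.normSq_nonneg y)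
      simp only [psi]
      linarith
    have hψcont : ContinuousOn (psi c ε K m) A := by
      apply ContinuousOn.sub
      apply ContinuousOn.sub continuousOn_const
      · apply continuousOn_const.mul
        apply ContinuousOn.zpow₀ Complex.continuous_normSq.continuousOn
        intro y hy
        left
        apply normSq_ne_zero
        intro h0
        have := ((hAmem y).mp hy).2
        rw [h0] at this
        simp at this
        linarith
      · exact continuousOn_const.mul Complex.continuous_normSq.continuousOn
    have hAcomp : IsCompact A := (isCompact_closedBall 0 R).diff isOpen_ball
    have hzA : z ∈ A := (hAmem z).mpr ⟨hzR, hz2⟩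
    have hucont : ContinuousOn (fun y => w y - psi c ε K m y) A := hwc.sub hψcont
    obtain ⟨z0, hz0A, hz0max⟩ := hAcomp.exists_isMaxOn ⟨z, hzA⟩ hucont
    obtain ⟨hz0R, hz02⟩ := (hAmem z0).mp hz0A
    have hmain : w z0 - psi c ε K m z0 ≤ 0 := by
      by_cases hbdy : ‖z0‖ = 2 ∨ ‖z0‖ = R
      · have := hbd z0 hbdy
        have := hψ_lb z0 hz0R hz02
        linarith
      · push_neg at hbdy
        exfalso
        have h2lt : 2 < ‖z0‖ := lt_of_le_of_ne hz02 (Ne.symm hbdy.1)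
        have hRlt : ‖z0‖ < R := lt_of_le_of_ne hz0R hbdy.2
        have hVopen : IsOpen V := isOpen_ball.sdiff isClosed_closedBall
        have hz0V : z0 ∈ V := (hVmem z0).mpr ⟨hRlt, h2lt⟩
        have hVA : V ⊆ A := by
          intro y hy
          obtain ⟨hy1, hy2⟩ := (hVmem y).mp hy
          exact (hAmem y).mpr ⟨hy1.le, hy2.le⟩
        have hz0ne : z0 ≠ 0 := hVne z0 hz0V
        have hlocal : IsLocalMax (fun y => w y - psi c ε K m y) z0 := by
          filter_upwards [hVopen.mem_nhds hz0V] with y hy using hz0max (hVA hy)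
        have hkey : ∀ v : ℂ,
            iteratedFDeriv ℝ 2 w z0 ![v, v] ≤
              (c * m * (((-(m:ℤ)-1 : ℤ) : ℝ) * Complex.normSq z0 ^ (-(m:ℤ)-1-1) * nsqD z0 v)) * nsqD z0 v
                + (c * m * (Complex.normSq z0 ^ (-(m:ℤ)-1)) - ε) * (2*v.re^2 + 2*v.im^2) := by
          intro v
          obtain ⟨δ, hδ, hmemδ, hD1, hD2⟩ := bridge hVopen hwreg hz0V v
          have hg : ∀ t : ℝ, |t| < δ →
              HasDerivAt (fun s : ℝ => w (z0 + s • v) - psi c ε K m (z0 + s • v))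
                (fderiv ℝ w (z0 + t • v) v - psi' c ε m (z0 + t • v) v) t := by
            intro t ht
            have hne : z0 + t • v ≠ 0 := hVne _ (hmemδ t ht)
            have hψd : HasDerivAt (fun s : ℝ => psi c ε K m (z0 + s • v))
                (psi' c ε m (z0 + t • v) v) t :=
              by have := (hasFDerivAt_psi c ε K m hne).comp_hasDerivAt t (hasDerivAt_line z0 v t); exact this
            exact (hD1 t ht).sub hψd
          have hg' : HasDerivAt (fun t : ℝ => fderiv ℝ w (z0 + t • v) v - psi' c ε m (z0 + t • v) v)
              (iteratedFDeriv ℝ 2 w z0 ![v, v] -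
                ((c * m * (((-(m:ℤ)-1 : ℤ) : ℝ) * Complex.normSq z0 ^ (-(m:ℤ)-1-1) * nsqD z0 v)) * nsqD z0 v
                  + (c * m * (Complex.normSq z0 ^ (-(m:ℤ)-1)) - ε) * (2*v.re^2 + 2*v.im^2))) 0 :=
            hD2.sub (psi_line_deriv c ε m v hz0ne)
          have hgmax : IsLocalMax (fun t : ℝ => w (z0 + t • v) - psi c ε K m (z0 + t • v)) 0 := by
            have hcont : ContinuousAt (fun t : ℝ => z0 + t • v) 0 :=
              (continuous_const.add (continuous_id.smul continuous_const)).continuousAt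
            have h00 : z0 + (0:ℝ) • v = z0 := by simp
            have htend : Filter.Tendsto (fun t : ℝ => z0 + t • v) (nhds 0) (nhds z0) := by
              have := hcont.tendsto
              rwa [h00] at this
            have hev := htend.eventually hlocal
            simpa [IsLocalMax, IsMaxFilter, h00] using hev
          have := secondDeriv_nonpos hδ hg hgmax hg'
          linarith
        have h1 := hkey 1
        have hI := hkey Complex.I
        have hlapw := hlap z0 h2lt hRlt
        have hSne : Complex.normSq z0 ≠ 0 := normSq_ne_zero hz0ne
        have hSpos : 0 < Complex.normSq z0 := lt_of_le_of_ne (Complex.normSq_nonneg z0) (Ne.symm hSne)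
        have hpow : ‖z0‖ ^ (4 + 2 * N) = Complex.normSq z0 ^ (N + 2) := by
          rw [normSq_eq_norm_sq, ← pow_mul]
          congr 1
          omega
        have hnsqd1 : nsqD z0 1 = 2 * z0.re := by
          rw [nsqD_apply]; simp
        have hnsqdI : nsqD z0 Complex.I = 2 * z0.im := by
          rw [nsqD_apply]; simp
        have e1 : Complex.normSq z0 ^ (-(m:ℤ)-1) = (Complex.normSq z0 ^ (N+2))⁻¹ := by
          rw [show (-(m:ℤ)-1) = -((N+2:ℕ):ℤ) by push_cast [hm]; ring, zpow_neg, zpow_natCast]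
        have e2 : Complex.normSq z0 ^ (-(m:ℤ)-1-1) = (Complex.normSq z0 ^ (N+3))⁻¹ := by
          rw [show (-(m:ℤ)-1-1) = -((N+3:ℕ):ℤ) by push_cast [hm]; ring, zpow_neg, zpow_natCast]
        have hSrel : Complex.normSq z0 = z0.re ^ 2 + z0.im ^ 2 := by
          rw [Complex.normSq_apply]; ring
        have hsum :
            ((c * m * (((-(m:ℤ)-1 : ℤ) : ℝ) * Complex.normSq z0 ^ (-(m:ℤ)-1-1) * nsqD z0 1)) * nsqD z0 1
                + (c * m * (Complex.normSq z0 ^ (-(m:ℤ)-1)) - ε) * (2*(1:ℂ).re^2 + 2*(1:ℂ).im^2))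
              + ((c * m * (((-(m:ℤ)-1 : ℤ) : ℝ) * Complex.normSq z0 ^ (-(m:ℤ)-1-1) * nsqD z0 Complex.I)) * nsqD z0 Complex.I
                + (c * m * (Complex.normSq z0 ^ (-(m:ℤ)-1)) - ε) * (2*Complex.I.re^2 + 2*Complex.I.im^2))
              = -(a / ‖z0‖ ^ (4 + 2 * N)) - 4 * ε := by
          have hTU : (Complex.normSq z0 ^ (N+3))⁻¹ * Complex.normSq z0
              = (Complex.normSq z0 ^ (N+2))⁻¹ := by
            rw [pow_succ, mul_inv]
            field_simp
          have h4c : c * (4*((N:ℝ)+1)^2) = a := by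
            rw [hc]
            have h2 : ((2:ℝ) + 2*(N:ℝ)) ^ 2 = 4*((N:ℝ)+1)^2 := by ring
            rw [h2]
            field_simp
          have hmain := sum_formula a c ε (Complex.normSq z0) z0.re z0.im
            ((Complex.normSq z0 ^ (N+2))⁻¹) ((Complex.normSq z0 ^ (N+3))⁻¹) (N:ℝ)
            hSrel hTU h4c
          rw [hnsqd1, hnsqdI, e1, e2, hpow]
          simp only [Complex.one_re, Complex.one_im, Complex.I_re, Complex.I_im]
          rw [div_eq_mul_inv]
          push_cast [hm]
          linear_combination hmain
        have hlb : lap w z0 ≤ -(a / ‖z0‖ ^ (4 + 2 * N)) - 4 * ε := by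
          rw [lap]
          rw [← hsum]
          exact add_le_add h1 hI
        linarith
    have huz : w z - psi c ε K m z ≤ 0 := le_trans (hz0max hzA) hmain
    have := hψ_ub z
    rw [hK] at this
    linarith
  by_contra hcon
  push_neg at hcon
  have hbound : b + c / 2 ^ (2 + 2 * N) = b + a / ((2 + 2 * (N:ℝ)) ^ 2 * 2 ^ (2 + 2 * N)) := by
    rw [hc, div_div]
  rw [← hbound] at hcon
  have hR0 : (0:ℝ) < R ^ 2 := by positivity
  set B : ℝ := b + c / 2 ^ (2 + 2 * N) with hB
  have hd : 0 < w z - B := by linarith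
  have hεpos : 0 < (w z - B) / (2 * R ^ 2) := by positivity
  have hk := key _ hεpos
  have : (w z - B) / (2 * R ^ 2) * R ^ 2 = (w z - B) / 2 := by
    field_simp
  rw [this] at hk
  clear_value B
  linarith


lemma lap_neg (f : ℂ → ℝ) (z : ℂ) : lap (fun y => -(f y)) z = -(lap f z) := by
  have h : (fun y => -(f y)) = -f := rfl
  rw [lap, lap, h, iteratedFDeriv_neg_apply]
  simp
  ring

/-- maximum-principle comparison on the annulus `2 ≤ |z| ≤ R`: if
`|Δw| ≤ a|z|^{-4-2N}` inside and `|w| ≤ b` on both boundary circles, then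
`|w| ≤ b + a/((2+2N)² 2^{2+2N})` on the whole annulus. -/
theorem annulus_maximum_principle (N : ℕ) (R a b : ℝ) (hR : 2 < R) (ha : 0 ≤ a) (hb : 0 ≤ b)
    (w : ℂ → ℝ)
    (hwc : ContinuousOn w (closedBall 0 R \ ball 0 2))
    (hwreg : ContDiffOn ℝ 2 w (ball 0 R \ closedBall 0 2))
    (hlap : ∀ z : ℂ, 2 < ‖z‖ → ‖z‖ < R → |lap w z| ≤ a / ‖z‖ ^ (4 + 2 * N))
    (hbd : ∀ z : ℂ, ‖z‖ = 2 ∨ ‖z‖ = R → |w z| ≤ b) :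
    ∀ z : ℂ, 2 ≤ ‖z‖ → ‖z‖ ≤ R →
      |w z| ≤ b + a / ((2 + 2 * (N:ℝ)) ^ 2 * 2 ^ (2 + 2 * N)) := by
  intro z hz2 hzR
  refine abs_le.mpr ⟨?_, ?_⟩
  · have := one_sided N R a b hR ha hb (fun y => -(w y)) hwc.neg hwreg.neg
      (fun y h1 h2 => by
        rw [lap_neg]
        have := (abs_le.mp (hlap y h1 h2)).2
        linarith)
      (fun y hy => by
        have := (abs_le.mp (hbd y hy)).1
        show -(w y) ≤ b
        linarith) z hz2 hzR
    linarith
  · exact one_sided N R a b hR ha hb w hwc hwreg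
      (fun y h1 h2 => (abs_le.mp (hlap y h1 h2)).1)
      (fun y hy => (abs_le.mp (hbd y hy)).2) z hz2 hzR
end
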